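/- arXiv:2209.10942 — 2 statements merged into one kernel-verified Lean document; each statement's English description precedes it below -/
import Mathlib

section
/- Let X be a complex on {1,...,n} of the form {∅, X₀,...,X_{d−1}, X^d} with complete (d−1)-skeleton. For neighbouring (d−1)-simplexes σ₁ ∼ σ₂, let H_{σ₁,σ₂} denote the subcomplex induced by the common neighbours S_{σ₁} ∩ S_{σ₂}. Suppose that for all pairs of edges, H_{σ₁,σ₂} ≅ H_{σ₃,σ₄} implies (σ₁,σ₂) = (σ₃,σ₄) as unordered pairs. Then X can be exactly reconstructed from the collection of 1-neighbourhoods {N_{1,X}(σ) : σ ∈ X_{d−1}}; that is, any complex X̃ of the same form whose 1-neighbourhoods are isomorphic to those of X (simplex by simplex) equals X. -/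
open Finset

/-- Two `(d-1)`-simplexes are neighbours in the complex with `d`-simplex set `Xd`
if their union is a `d`-simplex of the complex. -/
def Nbr (n d : ℕ) (Xd : Finset (Finset (Fin n))) (σ σ' : Finset (Fin n)) : Prop :=
  σ.card = d ∧ σ'.card = d ∧ σ ∪ σ' ∈ Xd

/-- The `1`-neighbourhood of a `(d-1)`-simplex `σ`: the subcomplex (of the complex with
complete `(d-1)`-skeleton and `d`-simplex set `Xd`) induced by `σ` together with its
neighbours. -/
def oneNbhd (n d : ℕ) (Xd : Finset (Finset (Fin n))) (σ : Finset (Fin n)) :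
    Set (Finset (Fin n)) :=
  {τ | (τ.card ≤ d ∨ τ ∈ Xd) ∧
    ∃ σ' σ'' : Finset (Fin n), (σ' = σ ∨ Nbr n d Xd σ σ') ∧
      (σ'' = σ ∨ Nbr n d Xd σ σ'') ∧ τ ⊆ σ' ∪ σ''}

/-- `H_{σ₁,σ₂}`: the subcomplex induced by the common neighbours of `σ₁` and `σ₂`. -/
def commonNbhdComplex (n d : ℕ) (Xd : Finset (Finset (Fin n)))
    (σ₁ σ₂ : Finset (Fin n)) : Set (Finset (Fin n)) :=
  {τ | (τ.card ≤ d ∨ τ ∈ Xd) ∧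
    ∃ σ σ' : Finset (Fin n), Nbr n d Xd σ₁ σ ∧ Nbr n d Xd σ₂ σ ∧
      Nbr n d Xd σ₁ σ' ∧ Nbr n d Xd σ₂ σ' ∧ τ ⊆ σ ∪ σ'}

/-- Isomorphism of two (sub)complexes on the vertex set `Fin n`: a permutation of the
vertices carrying the simplexes of one exactly onto the simplexes of the other. -/
def ComplexIso (n : ℕ) (A B : Set (Finset (Fin n))) : Prop :=
  ∃ e : Equiv.Perm (Fin n), ∀ τ : Finset (Fin n), τ ∈ A ↔ τ.image e ∈ B

namespace FPAux

variable {n d : ℕ}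

/-- image of a finset under a permutation: card. -/
lemma pcard (e : Equiv.Perm (Fin n)) (τ : Finset (Fin n)) :
    (τ.image ⇑e).card = τ.card := Finset.card_image_of_injective _ e.injective

lemma punion (e : Equiv.Perm (Fin n)) (a b : Finset (Fin n)) :
    (a ∪ b).image ⇑e = a.image ⇑e ∪ b.image ⇑e := Finset.image_union _ _

lemma pcancel (e : Equiv.Perm (Fin n)) (τ : Finset (Fin n)) :
    (τ.image ⇑e).image ⇑e.symm = τ := by
  rw [Finset.image_image]
  simp

lemma pcancel' (e : Equiv.Perm (Fin n)) (τ : Finset (Fin n)) :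
    (τ.image ⇑e.symm).image ⇑e = τ := by
  rw [Finset.image_image]
  simp

lemma pinj (e : Equiv.Perm (Fin n)) {a b : Finset (Fin n)}
    (h : a.image ⇑e = b.image ⇑e) : a = b := by
  have := congrArg (Finset.image ⇑e.symm) h
  rwa [pcancel, pcancel] at this

/-- visible-neighbour-or-centre predicate. -/
def Vis (d : ℕ) (N : Set (Finset (Fin n))) (c ζ : Finset (Fin n)) : Prop :=
  ζ = c ∨ (ζ.card = d ∧ ζ ∪ c ∈ N ∧ (ζ ∪ c).card = d + 1)

/-- `c` is a centre of the star-like complex `N`. -/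
def IsStar (d : ℕ) (N : Set (Finset (Fin n))) (c : Finset (Fin n)) : Prop :=
  c.card = d ∧ c ∈ N ∧ (∀ τ ∈ N, τ.card ≤ d + 1) ∧
  (∀ τ ∈ N, ∃ γ γ', Vis d N c γ ∧ Vis d N c γ' ∧ τ ⊆ γ ∪ γ') ∧
  (∀ τ : Finset (Fin n), τ.card ≤ d →
    (∃ γ γ', Vis d N c γ ∧ Vis d N c γ' ∧ τ ⊆ γ ∪ γ') → τ ∈ N)

section OneNbhdBasic

variable {Xd : Finset (Finset (Fin n))} {σ : Finset (Fin n)}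

lemma mem_oneNbhd_top (hXd : ∀ τ ∈ Xd, τ.card = d + 1) {τ : Finset (Fin n)}
    (h : τ ∈ oneNbhd n d Xd σ) (hc : τ.card = d + 1) : τ ∈ Xd := by
  rcases h.1 with h1 | h1
  · omega
  · exact h1

lemma subset_mem_oneNbhd (hσ : σ.card = d) {τ : Finset (Fin n)} (h : τ ⊆ σ) :
    τ ∈ oneNbhd n d Xd σ := by
  refine ⟨Or.inl ?_, σ, σ, Or.inl rfl, Or.inl rfl, by simpa using h⟩
  calc τ.card ≤ σ.card := Finset.card_le_card h
  _ = d := hσ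

lemma centre_mem_oneNbhd (hσ : σ.card = d) : σ ∈ oneNbhd n d Xd σ :=
  subset_mem_oneNbhd hσ subset_rfl

lemma nbr_union_mem_oneNbhd {b : Finset (Fin n)} (h : Nbr n d Xd σ b) :
    σ ∪ b ∈ oneNbhd n d Xd σ :=
  ⟨Or.inr h.2.2, σ, b, Or.inl rfl, Or.inr h, subset_rfl⟩

lemma vis_iff_nbr (hXd : ∀ τ ∈ Xd, τ.card = d + 1) (hσ : σ.card = d)
    {γ : Finset (Fin n)} :
    Vis d (oneNbhd n d Xd σ) σ γ ↔ (γ = σ ∨ Nbr n d Xd σ γ) := by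
  constructor
  · rintro (h | ⟨h1, h2, h3⟩)
    · exact Or.inl h
    · refine Or.inr ⟨hσ, h1, ?_⟩
      rw [Finset.union_comm]
      exact mem_oneNbhd_top hXd h2 h3
  · rintro (h | h)
    · exact Or.inl h
    · refine Or.inr ⟨h.2.1, ?_, ?_⟩
      · have : γ ∪ σ = σ ∪ γ := Finset.union_comm _ _
        rw [this]
        exact nbr_union_mem_oneNbhd h
      · rw [Finset.union_comm]
        exact hXd _ h.2.2

lemma isStar_oneNbhd (hXd : ∀ τ ∈ Xd, τ.card = d + 1) (hσ : σ.card = d) :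
    IsStar d (oneNbhd n d Xd σ) σ := by
  refine ⟨hσ, centre_mem_oneNbhd hσ, ?_, ?_, ?_⟩
  · intro τ hτ
    rcases hτ.1 with h | h
    · omega
    · exact le_of_eq (hXd _ h)
  · rintro τ ⟨h1, γ, γ', hg, hg', hsub⟩
    refine ⟨γ, γ', ?_, ?_, hsub⟩
    · rw [vis_iff_nbr hXd hσ]; exact hg
    · rw [vis_iff_nbr hXd hσ]; exact hg'
  · rintro τ hcard ⟨γ, γ', hg, hg', hsub⟩
    rw [vis_iff_nbr hXd hσ] at hg hg'
    exact ⟨Or.inl hcard, γ, γ', hg, hg', hsub⟩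

end OneNbhdBasic

section Transport

variable {N N₂ : Set (Finset (Fin n))} {c : Finset (Fin n)} {e : Equiv.Perm (Fin n)}

lemma iso_symm (h : ∀ τ, τ ∈ N ↔ τ.image ⇑e ∈ N₂) :
    ∀ τ, τ ∈ N₂ ↔ τ.image ⇑e.symm ∈ N := by
  intro τ
  rw [h (τ.image ⇑e.symm), pcancel']

lemma vis_transport (h : ∀ τ, τ ∈ N ↔ τ.image ⇑e ∈ N₂) {ζ : Finset (Fin n)}
    (hv : Vis d N c ζ) : Vis d N₂ (c.image ⇑e) (ζ.image ⇑e) := by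
  rcases hv with hv | ⟨h1, h2, h3⟩
  · exact Or.inl (by rw [hv])
  · refine Or.inr ⟨by rw [pcard, h1], ?_, ?_⟩
    · rw [← punion]; exact (h _).1 h2
    · rw [← punion, pcard]; exact h3

lemma isStar_transport (h : ∀ τ, τ ∈ N ↔ τ.image ⇑e ∈ N₂)
    (hs : IsStar d N c) : IsStar d N₂ (c.image ⇑e) := by
  obtain ⟨h1, h2, h3, h4, h5⟩ := hs
  refine ⟨by rw [pcard, h1], (h _).1 h2, ?_, ?_, ?_⟩
  · intro τ hτ
    have := h3 _ (((iso_symm h) τ).1 hτ)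
    rwa [pcard] at this
  · intro τ hτ
    obtain ⟨γ, γ', hg, hg', hsub⟩ := h4 _ (((iso_symm h) τ).1 hτ)
    refine ⟨γ.image ⇑e, γ'.image ⇑e, vis_transport h hg, vis_transport h hg', ?_⟩
    rw [← punion]
    have : τ = (τ.image ⇑e.symm).image ⇑e := (pcancel' e τ).symm
    rw [this]
    exact Finset.image_subset_image hsub
  · intro τ hcard ⟨γ, γ', hg, hg', hsub⟩
    have hv : Vis d N (c.image ⇑e |>.image ⇑e.symm) (γ.image ⇑e.symm) :=
      vis_transport (iso_symm h) hg
    rw [pcancel] at hv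
    have hv' : Vis d N (c.image ⇑e |>.image ⇑e.symm) (γ'.image ⇑e.symm) :=
      vis_transport (iso_symm h) hg'
    rw [pcancel] at hv'
    have hmem : τ.image ⇑e.symm ∈ N := by
      refine h5 _ (by rw [pcard]; exact hcard) ⟨_, _, hv, hv', ?_⟩
      rw [← punion]
      exact Finset.image_subset_image hsub
    have := (h _).1 hmem
    rwa [pcancel'] at this

end Transport

end FPAux

namespace FPAux

variable {n d : ℕ}

section BridgeHelpers

variable {N : Set (Finset (Fin n))} {c : Finset (Fin n)}

/-- a visible set other than the centre has exactly one external vertex. -/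
lemma vis_struct (hc : c.card = d) {ζ : Finset (Fin n)} (h : Vis d N c ζ)
    (hne : ζ ≠ c) : ∃ w, w ∉ c ∧ ζ \ c = {w} ∧ ζ ⊆ insert w c ∧
      insert w c ∈ N ∧ (insert w c).card = d + 1 := by
  rcases h with h | ⟨h1, h2, h3⟩
  · exact absurd h hne
  · have hsub : c ⊆ ζ ∪ c := Finset.subset_union_right
    have hdiff : (ζ ∪ c) \ c = ζ \ c := Finset.union_sdiff_right _ _
    have hcard : (ζ \ c).card = 1 := by
      rw [← hdiff, Finset.card_sdiff_of_subset hsub, h3, hc]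
      omega
    obtain ⟨w, hw⟩ := Finset.card_eq_one.1 hcard
    have hwnc : w ∉ c := by
      have : w ∈ ζ \ c := by rw [hw]; exact Finset.mem_singleton_self w
      exact (Finset.mem_sdiff.1 this).2
    have hζsub : ζ ⊆ insert w c := by
      intro x hx
      by_cases hxc : x ∈ c
      · exact Finset.mem_insert_of_mem hxc
      · have : x ∈ ζ \ c := Finset.mem_sdiff.2 ⟨hx, hxc⟩
        rw [hw] at this
        rw [Finset.mem_singleton] at this
        rw [this]; exact Finset.mem_insert_self _ _
    have hins : ζ ∪ c = insert w c := by
      apply Finset.Subset.antisymm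
      · exact Finset.union_subset hζsub (Finset.subset_insert _ _)
      · intro x hx
        rcases Finset.mem_insert.1 hx with hx | hx
        · subst hx
          have : x ∈ ζ \ c := by rw [hw]; exact Finset.mem_singleton_self _
          exact Finset.mem_union_left _ (Finset.mem_sdiff.1 this).1
        · exact Finset.mem_union_right _ hx
    exact ⟨w, hwnc, hw, hζsub, by rw [← hins]; exact h2, by rw [← hins]; exact h3⟩

/-- a covered element's external vertex gives a visible top. -/
lemma cover_ext (hc : c.card = d) {τ : Finset (Fin n)}
    (hcov : ∃ γ γ', Vis d N c γ ∧ Vis d N c γ' ∧ τ ⊆ γ ∪ γ')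
    {p : Fin n} (hp : p ∈ τ) (hpc : p ∉ c) :
    insert p c ∈ N ∧ (insert p c).card = d + 1 := by
  obtain ⟨γ, γ', h1, h2, hsub⟩ := hcov
  have key : ∀ ζ : Finset (Fin n), Vis d N c ζ → p ∈ ζ →
      insert p c ∈ N ∧ (insert p c).card = d + 1 := by
    intro ζ hv hpζ
    have hne : ζ ≠ c := fun h => hpc (h ▸ hpζ)
    obtain ⟨w, hw1, hw2, hw3, hw4, hw5⟩ := vis_struct hc hv hne
    have hpw : p = w := by
      have : p ∈ ζ \ c := Finset.mem_sdiff.2 ⟨hpζ, hpc⟩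
      rw [hw2] at this
      exact Finset.mem_singleton.1 this
    rw [hpw]
    exact ⟨hw4, hw5⟩
  rcases Finset.mem_union.1 (hsub hp) with h | h
  · exact key γ h1 h
  · exact key γ' h2 h

/-- structure of a top simplex missing a centre vertex. -/
lemma top_struct (hstar : IsStar d N c) {τ : Finset (Fin n)} (hτ : τ ∈ N)
    (hcard : τ.card = d + 1) {q : Fin n} (hq : q ∈ c) (hqτ : q ∉ τ) :
    ∃ y y', y ∉ c ∧ y' ∉ c ∧ y ≠ y' ∧ τ = insert y (insert y' (c.erase q)) := by
  obtain ⟨hc, _, _, hval, _⟩ := hstar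
  obtain ⟨γ, γ', h1, h2, hsub⟩ := hval τ hτ
  -- bound the external part
  have hbound : ∀ ζ : Finset (Fin n), Vis d N c ζ → ∃ E : Finset (Fin n),
      E.card ≤ 1 ∧ ζ \ c ⊆ E ∧ ∀ x ∈ E, x ∉ c := by
    intro ζ hv
    by_cases hne : ζ = c
    · exact ⟨∅, by simp, by simp [hne], by simp⟩
    · obtain ⟨w, hw1, hw2, _, _, _⟩ := vis_struct hc hv hne
      exact ⟨{w}, by simp, by rw [hw2], by simpa using hw1⟩
  obtain ⟨E1, hE1c, hE1s, hE1n⟩ := hbound γ h1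
  obtain ⟨E2, hE2c, hE2s, hE2n⟩ := hbound γ' h2
  have hτdiff : τ \ c ⊆ E1 ∪ E2 := by
    intro x hx
    obtain ⟨hx1, hx2⟩ := Finset.mem_sdiff.1 hx
    rcases Finset.mem_union.1 (hsub hx1) with h | h
    · exact Finset.mem_union_left _ (hE1s (Finset.mem_sdiff.2 ⟨h, hx2⟩))
    · exact Finset.mem_union_right _ (hE2s (Finset.mem_sdiff.2 ⟨h, hx2⟩))
  have hτc : τ ∩ c ⊆ c.erase q := by
    intro x hx
    obtain ⟨hx1, hx2⟩ := Finset.mem_inter.1 hx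
    refine Finset.mem_erase.2 ⟨?_, hx2⟩
    rintro rfl
    exact hqτ hx1
  have hcardτc : (τ ∩ c).card ≤ d - 1 := by
    have := Finset.card_le_card hτc
    rwa [Finset.card_erase_of_mem hq, hc] at this
  have hsplit : (τ ∩ c).card + (τ \ c).card = τ.card :=
    Finset.card_inter_add_card_sdiff τ c
  have hdge : 1 ≤ d := by
    have := Finset.card_ne_zero_of_mem hq
    omega
  have hτdcard : 2 ≤ (τ \ c).card := by omega
  have hE12 : (E1 ∪ E2).card ≤ 2 := by
    calc (E1 ∪ E2).card ≤ E1.card + E2.card := Finset.card_union_le _ _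
    _ ≤ 2 := by omega
  have hEQ : τ \ c = E1 ∪ E2 := by
    apply Finset.eq_of_subset_of_card_le hτdiff
    calc (E1 ∪ E2).card ≤ 2 := hE12
    _ ≤ (τ \ c).card := hτdcard
  have hτd2 : (τ \ c).card = 2 := le_antisymm (by rw [hEQ]; exact hE12) hτdcard
  obtain ⟨y, y', hyy, hyy'⟩ := Finset.card_eq_two.1 hτd2
  have hτceq : τ ∩ c = c.erase q := by
    apply Finset.eq_of_subset_of_card_le hτc
    rw [Finset.card_erase_of_mem hq, hc]
    omega
  refine ⟨y, y', ?_, ?_, hyy, ?_⟩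
  · have : y ∈ τ \ c := by rw [hyy']; simp
    exact (Finset.mem_sdiff.1 this).2
  · have : y' ∈ τ \ c := by rw [hyy']; simp
    exact (Finset.mem_sdiff.1 this).2
  · have : τ = τ ∩ c ∪ τ \ c := by
      ext x
      simp only [Finset.mem_union, Finset.mem_inter, Finset.mem_sdiff]
      tauto
    rw [this, hτceq, hyy']
    ext x
    simp only [Finset.mem_union, Finset.mem_insert, Finset.mem_erase, Finset.mem_singleton]
    tauto

end BridgeHelpers

end FPAux

namespace FPAux

variable {n d : ℕ}

section BridgeCase1

variable {N : Set (Finset (Fin n))} {σ z : Finset (Fin n)}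

lemma bridge_case1 (hσ : IsStar d N σ) (hz : IsStar d N z)
    {u s : Fin n} (hzd : z \ σ = {u}) (hsd : σ \ z = {s}) :
    ∃ t : Equiv.Perm (Fin n), (∀ τ, τ ∈ N ↔ τ.image ⇑t ∈ N) ∧ z.image ⇑t = σ := by
  obtain ⟨hσc, hσm, hσb, hσv, hσcomp⟩ := hσ
  obtain ⟨hzc, hzm, hzb, hzv, hzcomp⟩ := hz
  have hu : u ∈ z := by
    have : u ∈ z \ σ := by rw [hzd]; exact Finset.mem_singleton_self _
    exact (Finset.mem_sdiff.1 this).1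
  have hunσ : u ∉ σ := by
    have : u ∈ z \ σ := by rw [hzd]; exact Finset.mem_singleton_self _
    exact (Finset.mem_sdiff.1 this).2
  have hsσ : s ∈ σ := by
    have : s ∈ σ \ z := by rw [hsd]; exact Finset.mem_singleton_self _
    exact (Finset.mem_sdiff.1 this).1
  have hsnz : s ∉ z := by
    have : s ∈ σ \ z := by rw [hsd]; exact Finset.mem_singleton_self _
    exact (Finset.mem_sdiff.1 this).2
  have hsu : s ≠ u := fun h => hunσ (h ▸ hsσ)
  have hm1 : ∀ x, x ∈ z → x ∉ σ → x = u := by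
    intro x h1 h2
    have : x ∈ z \ σ := Finset.mem_sdiff.2 ⟨h1, h2⟩
    rw [hzd] at this; exact Finset.mem_singleton.1 this
  have hm2 : ∀ x, x ∈ σ → x ∉ z → x = s := by
    intro x h1 h2
    have : x ∈ σ \ z := Finset.mem_sdiff.2 ⟨h1, h2⟩
    rw [hsd] at this; exact Finset.mem_singleton.1 this
  have hzeq : z = insert u (σ.erase s) := by
    ext x
    simp only [Finset.mem_insert, Finset.mem_erase]
    constructor
    · intro hx
      by_cases hxσ : x ∈ σ
      · refine Or.inr ⟨fun h => hsnz (h ▸ hx), hxσ⟩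
      · exact Or.inl (hm1 x hx hxσ)
    · rintro (rfl | ⟨hx1, hx2⟩)
      · exact hu
      · by_contra hxz
        exact hx1 (hm2 x hx2 hxz)
  set t := Equiv.swap s u with ht
  -- basic membership facts
  have hEs : insert s z ∈ N :=
    (cover_ext hzc (hzv σ hσm) hsσ hsnz).1
  have c2bwd : ∀ y, y ∉ σ → insert y z ∈ N → insert y σ ∈ N := by
    intro y h1 h2
    exact (cover_ext hσc (hσv _ h2) (Finset.mem_insert_self _ _) h1).1
  have c2fwd : ∀ y, y ∉ σ → y ≠ u → insert y σ ∈ N → insert y z ∈ N := by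
    intro y h1 h2 h3
    have hynz : y ∉ z := by
      rw [hzeq]
      simp only [Finset.mem_insert, Finset.mem_erase]
      rintro (rfl | ⟨_, h⟩)
      · exact h2 rfl
      · exact h1 h
    exact (cover_ext hzc (hzv _ h3) (Finset.mem_insert_self _ _) hynz).1
  -- main forward map
  have main : ∀ τ ∈ N, τ.image ⇑t ∈ N := by
    intro τ hτ
    by_cases hsτ : s ∈ τ <;> by_cases huτ : u ∈ τ
    · -- both: image = τ
      have : τ.image ⇑t = τ := by
        apply Finset.eq_of_subset_of_card_le
        · intro x hx
          obtain ⟨p, hp, rfl⟩ := Finset.mem_image.1 hx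
          by_cases h1 : p = s
          · subst h1; rw [ht, Equiv.swap_apply_left]; exact huτ
          · by_cases h2 : p = u
            · subst h2; rw [ht, Equiv.swap_apply_right]; exact hsτ
            · rw [ht, Equiv.swap_apply_of_ne_of_ne h1 h2]; exact hp
        · rw [pcard]
      rw [this]; exact hτ
    · -- s ∈ τ, u ∉ τ
      have hbnd := hσb τ hτ
      by_cases hcard : τ.card ≤ d
      · -- small case, via z-star
        obtain ⟨ζ, ζ', h1, h2, hsub⟩ := hzv τ hτ
        have key : ∀ ζ ζ' : Finset (Fin n), Vis d N z ζ → Vis d N z ζ' →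
            τ ⊆ ζ ∪ ζ' → s ∈ ζ → τ.image ⇑t ∈ N := by
          intro ζ ζ' hv1 hv2 hsub hsζ
          have hne : ζ ≠ z := fun h => hsnz (h ▸ hsζ)
          obtain ⟨w, hw1, hw2, hw3, _, _⟩ := vis_struct hzc hv1 hne
          have hws : s = w := by
            have : s ∈ ζ \ z := Finset.mem_sdiff.2 ⟨hsζ, hsnz⟩
            rw [hw2] at this; exact Finset.mem_singleton.1 this
          have himg : τ.image ⇑t ⊆ z ∪ ζ' := by
            intro x hx
            obtain ⟨p, hp, rfl⟩ := Finset.mem_image.1 hx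
            by_cases hp1 : p = s
            · subst hp1; rw [ht, Equiv.swap_apply_left]
              exact Finset.mem_union_left _ hu
            · have hp2 : p ≠ u := fun h => huτ (h ▸ hp)
              rw [ht, Equiv.swap_apply_of_ne_of_ne hp1 hp2]
              rcases Finset.mem_union.1 (hsub hp) with h | h
              · have := hw3 h
                rw [← hws] at this
                rcases Finset.mem_insert.1 this with h' | h'
                · exact absurd h' hp1
                · exact Finset.mem_union_left _ h'
              · exact Finset.mem_union_right _ h
          refine hzcomp _ (by rw [pcard]; exact hcard) ⟨z, ζ', Or.inl rfl, hv2, himg⟩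
        rcases Finset.mem_union.1 (hsub hsτ) with h | h
        · exact key ζ ζ' h1 h2 hsub h
        · exact key ζ' ζ h2 h1 (by rwa [Finset.union_comm]) h
      · -- top case
        have hcard' : τ.card = d + 1 := by omega
        obtain ⟨y, y', hy1, hy2, hy3, hyeq⟩ := top_struct ⟨hzc, hzm, hzb, hzv, hzcomp⟩ hτ hcard' hu huτ
        have hzeu : z.erase u = σ.erase s := by
          rw [hzeq, Finset.erase_insert]
          rw [Finset.mem_erase]
          rintro ⟨_, h⟩
          exact hunσ h
        rw [hzeu] at hyeq
        have hsyy : s = y ∨ s = y' := by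
          rw [hyeq] at hsτ
          rcases Finset.mem_insert.1 hsτ with h | h
          · exact Or.inl h
          · rcases Finset.mem_insert.1 h with h | h
            · exact Or.inr h
            · exact absurd (Finset.mem_of_mem_erase h) (by
                intro hh
                exact (Finset.mem_erase.1 h).1 rfl)
        -- get the other external y₀
        have hshape : ∃ y₀, y₀ ∉ z ∧ y₀ ≠ s ∧ τ = insert y₀ σ := by
          rcases hsyy with rfl | rfl
          · refine ⟨y', hy2, fun h => hy3 h.symm, ?_⟩
            rw [hyeq, Finset.insert_comm, Finset.insert_erase hsσ]
          · refine ⟨y, hy1, fun h => hy3 h, ?_⟩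
            rw [hyeq, Finset.insert_erase hsσ]
        obtain ⟨y₀, hy₀z, hy₀s, hττ⟩ := hshape
        have hy₀σ : y₀ ∉ σ := by
          intro h
          have : y₀ ∈ σ.erase s := Finset.mem_erase.2 ⟨hy₀s, h⟩
          rw [← hzeu] at this
          exact hy₀z (Finset.mem_of_mem_erase this)
        have hy₀u : y₀ ≠ u := fun h => hy₀z (h ▸ hu)
        have hmem : insert y₀ z ∈ N := c2fwd y₀ hy₀σ hy₀u (hττ ▸ hτ)
        have himg : τ.image ⇑t = insert y₀ z := by
          apply Finset.eq_of_subset_of_card_le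
          · intro x hx
            obtain ⟨p, hp, rfl⟩ := Finset.mem_image.1 hx
            rw [hττ] at hp
            rcases Finset.mem_insert.1 hp with rfl | hpσ
            · rw [ht, Equiv.swap_apply_of_ne_of_ne hy₀s hy₀u]
              exact Finset.mem_insert_self _ _
            · by_cases hps : p = s
              · subst hps; rw [ht, Equiv.swap_apply_left]
                exact Finset.mem_insert_of_mem hu
              · have hpu : p ≠ u := fun h => hunσ (h ▸ hpσ)
                rw [ht, Equiv.swap_apply_of_ne_of_ne hps hpu]
                refine Finset.mem_insert_of_mem ?_
                rw [hzeq]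
                exact Finset.mem_insert_of_mem (Finset.mem_erase.2 ⟨hps, hpσ⟩)
          · rw [pcard, hττ, Finset.card_insert_of_notMem hy₀z,
              Finset.card_insert_of_notMem hy₀σ, hσc, hzc]
        rw [himg]; exact hmem
    · -- u ∈ τ, s ∉ τ
      have hbnd := hσb τ hτ
      by_cases hcard : τ.card ≤ d
      · obtain ⟨γ, γ', h1, h2, hsub⟩ := hσv τ hτ
        have key : ∀ γ γ' : Finset (Fin n), Vis d N σ γ → Vis d N σ γ' →
            τ ⊆ γ ∪ γ' → u ∈ γ → τ.image ⇑t ∈ N := by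
          intro γ γ' hv1 hv2 hsub huγ
          have hne : γ ≠ σ := fun h => hunσ (h ▸ huγ)
          obtain ⟨w, hw1, hw2, hw3, _, _⟩ := vis_struct hσc hv1 hne
          have hwu : u = w := by
            have : u ∈ γ \ σ := Finset.mem_sdiff.2 ⟨huγ, hunσ⟩
            rw [hw2] at this; exact Finset.mem_singleton.1 this
          have himg : τ.image ⇑t ⊆ σ ∪ γ' := by
            intro x hx
            obtain ⟨p, hp, rfl⟩ := Finset.mem_image.1 hx
            by_cases hp1 : p = u
            · subst hp1; rw [ht, Equiv.swap_apply_right]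
              exact Finset.mem_union_left _ hsσ
            · have hp2 : p ≠ s := fun h => hsτ (h ▸ hp)
              rw [ht, Equiv.swap_apply_of_ne_of_ne hp2 hp1]
              rcases Finset.mem_union.1 (hsub hp) with h | h
              · have := hw3 h
                rw [← hwu] at this
                rcases Finset.mem_insert.1 this with h' | h'
                · exact absurd h' hp1
                · exact Finset.mem_union_left _ h'
              · exact Finset.mem_union_right _ h
          refine hσcomp _ (by rw [pcard]; exact hcard) ⟨σ, γ', Or.inl rfl, hv2, himg⟩
        rcases Finset.mem_union.1 (hsub huτ) with h | h
        · exact key γ γ' h1 h2 hsub h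
        · exact key γ' γ h2 h1 (by rwa [Finset.union_comm]) h
      · have hcard' : τ.card = d + 1 := by omega
        obtain ⟨y, y', hy1, hy2, hy3, hyeq⟩ := top_struct ⟨hσc, hσm, hσb, hσv, hσcomp⟩ hτ hcard' hsσ hsτ
        have huyy : u = y ∨ u = y' := by
          rw [hyeq] at huτ
          rcases Finset.mem_insert.1 huτ with h | h
          · exact Or.inl h
          · rcases Finset.mem_insert.1 h with h | h
            · exact Or.inr h
            · exact absurd (Finset.mem_of_mem_erase h) hunσ
        have hshape : ∃ y₀, y₀ ∉ σ ∧ y₀ ≠ u ∧ τ = insert y₀ z := by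
          rcases huyy with rfl | rfl
          · refine ⟨y', hy2, fun h => hy3 h.symm, ?_⟩
            rw [hyeq, Finset.insert_comm, hzeq]
          · refine ⟨y, hy1, fun h => hy3 h, ?_⟩
            rw [hyeq, hzeq]
        obtain ⟨y₀, hy₀σ, hy₀u, hττ⟩ := hshape
        have hy₀z : y₀ ∉ z := by
          rw [hzeq]
          simp only [Finset.mem_insert, Finset.mem_erase]
          rintro (rfl | ⟨_, h⟩)
          · exact hy₀u rfl
          · exact hy₀σ h
        have hy₀s : y₀ ≠ s := fun h => hy₀σ (h ▸ hsσ)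
        have hmem : insert y₀ σ ∈ N := c2bwd y₀ hy₀σ (hττ ▸ hτ)
        have himg : τ.image ⇑t = insert y₀ σ := by
          apply Finset.eq_of_subset_of_card_le
          · intro x hx
            obtain ⟨p, hp, rfl⟩ := Finset.mem_image.1 hx
            rw [hττ] at hp
            rcases Finset.mem_insert.1 hp with rfl | hpz
            · rw [ht, Equiv.swap_apply_of_ne_of_ne hy₀s hy₀u]
              exact Finset.mem_insert_self _ _
            · by_cases hpu : p = u
              · subst hpu; rw [ht, Equiv.swap_apply_right]
                exact Finset.mem_insert_of_mem hsσ
              · have hps : p ≠ s := fun h => hsnz (h ▸ hpz)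
                rw [ht, Equiv.swap_apply_of_ne_of_ne hps hpu]
                refine Finset.mem_insert_of_mem ?_
                rw [hzeq] at hpz
                rcases Finset.mem_insert.1 hpz with h | h
                · exact absurd h hpu
                · exact Finset.mem_of_mem_erase h
          · rw [pcard, hττ, Finset.card_insert_of_notMem hy₀σ,
              Finset.card_insert_of_notMem hy₀z, hσc, hzc]
        rw [himg]; exact hmem
    · -- neither
      have : τ.image ⇑t = τ := by
        apply Finset.eq_of_subset_of_card_le
        · intro x hx
          obtain ⟨p, hp, rfl⟩ := Finset.mem_image.1 hx
          have h1 : p ≠ s := fun h => hsτ (h ▸ hp)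
          have h2 : p ≠ u := fun h => huτ (h ▸ hp)
          rw [ht, Equiv.swap_apply_of_ne_of_ne h1 h2]; exact hp
        · rw [pcard]
      rw [this]; exact hτ
  -- conclude
  refine ⟨t, ?_, ?_⟩
  · intro τ
    constructor
    · exact fun h => main τ h
    · intro h
      have := main _ h
      have hcanc : (τ.image ⇑t).image ⇑t = τ := by
        rw [Finset.image_image]
        have hid : ⇑t ∘ ⇑t = id := by
          funext x
          simp only [Function.comp_apply, id_eq, ht]
          exact Equiv.swap_apply_self _ _ _
        rw [hid, Finset.image_id]
      rwa [hcanc] at this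
  · apply Finset.eq_of_subset_of_card_le
    · intro x hx
      obtain ⟨p, hp, rfl⟩ := Finset.mem_image.1 hx
      by_cases hpu : p = u
      · subst hpu; rw [ht, Equiv.swap_apply_right]; exact hsσ
      · have hps : p ≠ s := fun h => hsnz (h ▸ hp)
        rw [ht, Equiv.swap_apply_of_ne_of_ne hps hpu]
        rw [hzeq] at hp
        rcases Finset.mem_insert.1 hp with h | h
        · exact absurd h hpu
        · exact Finset.mem_of_mem_erase h
    · rw [pcard, hσc, hzc]

end BridgeCase1

end FPAux

namespace FPAux

variable {n d : ℕ}

section BridgeCase2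

variable {N : Set (Finset (Fin n))} {σ z : Finset (Fin n)}

lemma bridge_case2 (hσ : IsStar d N σ) (hz : IsStar d N z)
    {u v s s' : Fin n} (huv : u ≠ v) (hss' : s ≠ s')
    (hzd : z \ σ = {u, v}) (hsd : σ \ z = {s, s'}) :
    ∃ t : Equiv.Perm (Fin n), (∀ τ, τ ∈ N ↔ τ.image ⇑t ∈ N) ∧ z.image ⇑t = σ := by
  obtain ⟨hσc, hσm, hσb, hσv, hσcomp⟩ := hσ
  obtain ⟨hzc, hzm, hzb, hzv, hzcomp⟩ := hz
  have hu : u ∈ z ∧ u ∉ σ := by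
    have : u ∈ z \ σ := by rw [hzd]; simp
    exact Finset.mem_sdiff.1 this
  have hv : v ∈ z ∧ v ∉ σ := by
    have : v ∈ z \ σ := by rw [hzd]; simp
    exact Finset.mem_sdiff.1 this
  have hs : s ∈ σ ∧ s ∉ z := by
    have : s ∈ σ \ z := by rw [hsd]; simp
    exact Finset.mem_sdiff.1 this
  have hs' : s' ∈ σ ∧ s' ∉ z := by
    have : s' ∈ σ \ z := by rw [hsd]; simp
    exact Finset.mem_sdiff.1 this
  have hsu : s ≠ u := fun h => hu.2 (h ▸ hs.1)
  have hsv : s ≠ v := fun h => hv.2 (h ▸ hs.1)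
  have hs'u : s' ≠ u := fun h => hu.2 (h ▸ hs'.1)
  have hs'v : s' ≠ v := fun h => hv.2 (h ▸ hs'.1)
  set t : Equiv.Perm (Fin n) := (Equiv.swap s u).trans (Equiv.swap s' v) with ht
  have ta_s : t s = u := by
    rw [ht]; simp only [Equiv.trans_apply, Equiv.swap_apply_left]
    exact Equiv.swap_apply_of_ne_of_ne hs'u.symm huv
  have ta_u : t u = s := by
    rw [ht]; simp only [Equiv.trans_apply, Equiv.swap_apply_right]
    exact Equiv.swap_apply_of_ne_of_ne hss' hsv
  have ta_s' : t s' = v := by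
    rw [ht]; simp only [Equiv.trans_apply]
    rw [Equiv.swap_apply_of_ne_of_ne hss'.symm hs'u, Equiv.swap_apply_left]
  have ta_v : t v = s' := by
    rw [ht]; simp only [Equiv.trans_apply]
    rw [Equiv.swap_apply_of_ne_of_ne hsv.symm huv.symm, Equiv.swap_apply_right]
  have ta_fix : ∀ x, x ≠ s → x ≠ u → x ≠ s' → x ≠ v → t x = x := by
    intro x h1 h2 h3 h4
    rw [ht]; simp only [Equiv.trans_apply]
    rw [Equiv.swap_apply_of_ne_of_ne h1 h2, Equiv.swap_apply_of_ne_of_ne h3 h4]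
  have tt : ∀ x, t (t x) = x := by
    intro x
    by_cases h1 : x = s
    · subst h1; rw [ta_s, ta_u]
    · by_cases h2 : x = u
      · subst h2; rw [ta_u, ta_s]
      · by_cases h3 : x = s'
        · subst h3; rw [ta_s', ta_v]
        · by_cases h4 : x = v
          · subst h4; rw [ta_v, ta_s']
          · rw [ta_fix x h1 h2 h3 h4, ta_fix x h1 h2 h3 h4]
  -- membership facts
  have hAs : insert s z ∈ N := (cover_ext hzc (hzv σ hσm) hs.1 hs.2).1
  have hAs' : insert s' z ∈ N := (cover_ext hzc (hzv σ hσm) hs'.1 hs'.2).1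
  have hBu : insert u σ ∈ N := (cover_ext hσc (hσv z hzm) hu.1 hu.2).1
  have hBv : insert v σ ∈ N := (cover_ext hσc (hσv z hzm) hv.1 hv.2).1
  set W : Finset (Fin n) := σ ∪ z with hW
  -- every member is inside W
  have hvisW : ∀ ζ : Finset (Fin n), Vis d N z ζ → ζ ⊆ W := by
    intro ζ hvis
    by_cases hne : ζ = z
    · subst hne; exact Finset.subset_union_right
    obtain ⟨w, hw1, hw2, hw3, hw4, hw5⟩ := vis_struct hzc hvis hne
    have hwσ : w ∈ σ := by
      obtain ⟨γ, γ', h1, h2, hsub⟩ := hσv _ hw4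
      have hbound : ∀ ζ₁ : Finset (Fin n), Vis d N σ ζ₁ → ∃ E : Finset (Fin n),
          E.card ≤ 1 ∧ ζ₁ \ σ ⊆ E := by
        intro ζ₁ hv1
        by_cases hne1 : ζ₁ = σ
        · exact ⟨∅, by simp, by simp [hne1]⟩
        · obtain ⟨w₁, _, hw₁2, _, _, _⟩ := vis_struct hσc hv1 hne1
          exact ⟨{w₁}, by simp, by rw [hw₁2]⟩
      obtain ⟨E1, hE1c, hE1s⟩ := hbound γ h1
      obtain ⟨E2, hE2c, hE2s⟩ := hbound γ' h2
      have hdiffsub : (insert w z) \ σ ⊆ E1 ∪ E2 := by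
        intro x hx
        obtain ⟨hx1, hx2⟩ := Finset.mem_sdiff.1 hx
        rcases Finset.mem_union.1 (hsub hx1) with h | h
        · exact Finset.mem_union_left _ (hE1s (Finset.mem_sdiff.2 ⟨h, hx2⟩))
        · exact Finset.mem_union_right _ (hE2s (Finset.mem_sdiff.2 ⟨h, hx2⟩))
      have huvsub : ({u, v} : Finset (Fin n)) ⊆ E1 ∪ E2 := by
        intro x hx
        rcases Finset.mem_insert.1 hx with rfl | hx
        · exact hdiffsub (Finset.mem_sdiff.2 ⟨Finset.mem_insert_of_mem hu.1, hu.2⟩)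
        · rw [Finset.mem_singleton] at hx; subst hx
          exact hdiffsub (Finset.mem_sdiff.2 ⟨Finset.mem_insert_of_mem hv.1, hv.2⟩)
      have hEeq : ({u, v} : Finset (Fin n)) = E1 ∪ E2 := by
        apply Finset.eq_of_subset_of_card_le huvsub
        have h2 : ({u, v} : Finset (Fin n)).card = 2 := by
          rw [Finset.card_insert_of_notMem (by simpa using huv), Finset.card_singleton]
        rw [h2]
        calc (E1 ∪ E2).card ≤ E1.card + E2.card := Finset.card_union_le _ _
        _ ≤ 2 := by omega
      by_contra hwσ'
      have : w ∈ E1 ∪ E2 := hdiffsub (Finset.mem_sdiff.2 ⟨Finset.mem_insert_self _ _, hwσ'⟩)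
      rw [← hEeq] at this
      rcases Finset.mem_insert.1 this with rfl | h
      · exact hw1 hu.1
      · rw [Finset.mem_singleton] at h; subst h; exact hw1 hv.1
    intro x hx
    have := hw3 hx
    rcases Finset.mem_insert.1 this with rfl | h
    · exact Finset.mem_union_left _ hwσ
    · exact Finset.mem_union_right _ h
  have hWmem : ∀ τ ∈ N, τ ⊆ W := by
    intro τ hτ
    obtain ⟨ζ, ζ', h1, h2, hsub⟩ := hzv τ hτ
    exact hsub.trans (Finset.union_subset (hvisW ζ h1) (hvisW ζ' h2))
  -- d ≥ 2 and cards
  have hd2 : 2 ≤ d := by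
    have hsub : ({s, s'} : Finset (Fin n)) ⊆ σ := by
      intro x hx
      rcases Finset.mem_insert.1 hx with rfl | hx
      · exact hs.1
      · rw [Finset.mem_singleton] at hx; subst hx; exact hs'.1
    have := Finset.card_le_card hsub
    rw [Finset.card_insert_of_notMem (by simpa using hss'), Finset.card_singleton, hσc] at this
    omega
  have hWcard : W.card = d + 2 := by
    have h1 : (z \ σ).card + σ.card = (z ∪ σ).card := Finset.card_sdiff_add_card z σ
    have h2 : (z \ σ).card = 2 := by
      rw [hzd, Finset.card_insert_of_notMem (by simpa using huv), Finset.card_singleton]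
    rw [hW, Finset.union_comm]
    omega
  -- all small subsets of W are members
  have hsmall : ∀ τ : Finset (Fin n), τ ⊆ W → τ.card ≤ d → τ ∈ N := by
    intro τ hτW hτc
    obtain ⟨x, hx, x', hx', hxx'⟩ := Finset.one_lt_card.1 (by omega : 1 < z.card)
    have hζ : ∀ (a : Fin n) (y : Fin n), a ∈ σ → a ∉ z → insert a z ∈ N → y ∈ z →
        Vis d N z ((insert a z).erase y) := by
      intro a y ha1 ha2 ha3 hy
      refine Or.inr ⟨?_, ?_, ?_⟩
      · rw [Finset.card_erase_of_mem (Finset.mem_insert_of_mem hy),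
          Finset.card_insert_of_notMem ha2, hzc]
        omega
      · have : (insert a z).erase y ∪ z = insert a z := by
          apply Finset.Subset.antisymm
          · exact Finset.union_subset (Finset.erase_subset _ _) (Finset.subset_insert _ _)
          · intro p hp
            rcases Finset.mem_insert.1 hp with rfl | hp
            · refine Finset.mem_union_left _ (Finset.mem_erase.2 ⟨?_, Finset.mem_insert_self _ _⟩)
              intro hpy; exact ha2 (hpy ▸ hy)
            · exact Finset.mem_union_right _ hp
        rw [this]; exact ha3
      · have : (insert a z).erase y ∪ z = insert a z := by
          apply Finset.Subset.antisymm
          · exact Finset.union_subset (Finset.erase_subset _ _) (Finset.subset_insert _ _)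
          · intro p hp
            rcases Finset.mem_insert.1 hp with rfl | hp
            · refine Finset.mem_union_left _ (Finset.mem_erase.2 ⟨?_, Finset.mem_insert_self _ _⟩)
              intro hpy; exact ha2 (hpy ▸ hy)
            · exact Finset.mem_union_right _ hp
        rw [this, Finset.card_insert_of_notMem ha2, hzc]
    have hv₁ := hζ s x hs.1 hs.2 hAs hx
    have hv₂ := hζ s' x' hs'.1 hs'.2 hAs' hx'
    refine hzcomp τ hτc ⟨_, _, hv₁, hv₂, hτW.trans ?_⟩
    intro p hp
    by_cases hpz : p ∈ z
    · by_cases hpx : p = x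
      · subst hpx
        refine Finset.mem_union_right _ (Finset.mem_erase.2 ⟨hxx', Finset.mem_insert_of_mem hpz⟩)
      · exact Finset.mem_union_left _ (Finset.mem_erase.2 ⟨hpx, Finset.mem_insert_of_mem hpz⟩)
    · have hpσ : p ∈ σ := by
        rcases Finset.mem_union.1 hp with h | h
        · exact h
        · exact absurd h hpz
      have : p ∈ σ \ z := Finset.mem_sdiff.2 ⟨hpσ, hpz⟩
      rw [hsd] at this
      rcases Finset.mem_insert.1 this with rfl | hps'
      · refine Finset.mem_union_left _ (Finset.mem_erase.2 ⟨?_, Finset.mem_insert_self _ _⟩)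
        intro h; exact hs.2 (h ▸ hx)
      · rw [Finset.mem_singleton] at hps'; subst hps'
        refine Finset.mem_union_right _ (Finset.mem_erase.2 ⟨?_, Finset.mem_insert_self _ _⟩)
        intro h; exact hs'.2 (h ▸ hx')
  -- t maps W to W
  have hWt : W.image ⇑t = W := by
    apply Finset.eq_of_subset_of_card_le
    · intro x hx
      obtain ⟨p, hp, rfl⟩ := Finset.mem_image.1 hx
      by_cases h1 : p = s
      · subst h1; rw [ta_s]; exact Finset.mem_union_right _ hu.1
      by_cases h2 : p = u
      · subst h2; rw [ta_u]; exact Finset.mem_union_left _ hs.1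
      by_cases h3 : p = s'
      · subst h3; rw [ta_s']; exact Finset.mem_union_right _ hv.1
      by_cases h4 : p = v
      · subst h4; rw [ta_v]; exact Finset.mem_union_left _ hs'.1
      · rw [ta_fix p h1 h2 h3 h4]; exact hp
    · rw [pcard]
  -- main forward
  have main : ∀ τ ∈ N, τ.image ⇑t ∈ N := by
    intro τ hτ
    have hτW := hWmem τ hτ
    by_cases hcard : τ.card ≤ d
    · refine hsmall _ ?_ (by rw [pcard]; exact hcard)
      calc τ.image ⇑t ⊆ W.image ⇑t := Finset.image_subset_image hτW
      _ = W := hWt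
    · have hcard' : τ.card = d + 1 := by
        have := hσb τ hτ
        omega
      have hWd : (W \ τ).card = 1 := by
        rw [Finset.card_sdiff_of_subset hτW, hWcard, hcard']
        omega
      obtain ⟨x₀, hx₀⟩ := Finset.card_eq_one.1 hWd
      have hx₀W : x₀ ∈ W ∧ x₀ ∉ τ := by
        have : x₀ ∈ W \ τ := by rw [hx₀]; simp
        exact Finset.mem_sdiff.1 this
      have hτeq : τ = W.erase x₀ := by
        apply Finset.eq_of_subset_of_card_le
        · intro p hp
          refine Finset.mem_erase.2 ⟨?_, hτW hp⟩
          rintro rfl; exact hx₀W.2 hp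
        · rw [Finset.card_erase_of_mem hx₀W.1, hWcard, hcard']
          omega
      have himg : τ.image ⇑t = W.erase (t x₀) := by
        rw [hτeq, Finset.image_erase t.injective, hWt]
      rw [himg]
      -- case on x₀
      have herase : ∀ (a b : Fin n) (S : Finset (Fin n)), a ∈ W → W.erase b = S → S ∈ N →
          True := fun _ _ _ _ _ _ => trivial
      by_cases h1 : x₀ = s
      · subst h1
        rw [ta_s]
        have : W.erase u = insert v σ := by
          apply (Finset.eq_of_subset_of_card_le ?_ ?_).symm
          · intro p hp
            rcases Finset.mem_insert.1 hp with rfl | hp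
            · exact Finset.mem_erase.2 ⟨huv.symm, Finset.mem_union_right _ hv.1⟩
            · refine Finset.mem_erase.2 ⟨?_, Finset.mem_union_left _ hp⟩
              rintro rfl; exact hu.2 hp
          · rw [Finset.card_erase_of_mem (Finset.mem_union_right _ hu.1), hWcard,
              Finset.card_insert_of_notMem hv.2, hσc]
            omega
        rw [this]; exact hBv
      by_cases h2 : x₀ = u
      · subst h2
        rw [ta_u]
        have : W.erase s = insert s' z := by
          apply (Finset.eq_of_subset_of_card_le ?_ ?_).symm
          · intro p hp
            rcases Finset.mem_insert.1 hp with rfl | hp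
            · exact Finset.mem_erase.2 ⟨hss'.symm, Finset.mem_union_left _ hs'.1⟩
            · refine Finset.mem_erase.2 ⟨?_, Finset.mem_union_right _ hp⟩
              rintro rfl; exact hs.2 hp
          · rw [Finset.card_erase_of_mem (Finset.mem_union_left _ hs.1), hWcard,
              Finset.card_insert_of_notMem hs'.2, hzc]
            omega
        rw [this]; exact hAs'
      by_cases h3 : x₀ = s'
      · subst h3
        rw [ta_s']
        have : W.erase v = insert u σ := by
          apply (Finset.eq_of_subset_of_card_le ?_ ?_).symm
          · intro p hp
            rcases Finset.mem_insert.1 hp with rfl | hp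
            · exact Finset.mem_erase.2 ⟨huv, Finset.mem_union_right _ hu.1⟩
            · refine Finset.mem_erase.2 ⟨?_, Finset.mem_union_left _ hp⟩
              rintro rfl; exact hv.2 hp
          · rw [Finset.card_erase_of_mem (Finset.mem_union_right _ hv.1), hWcard,
              Finset.card_insert_of_notMem hu.2, hσc]
            omega
        rw [this]; exact hBu
      by_cases h4 : x₀ = v
      · subst h4
        rw [ta_v]
        have : W.erase s' = insert s z := by
          apply (Finset.eq_of_subset_of_card_le ?_ ?_).symm
          · intro p hp
            rcases Finset.mem_insert.1 hp with rfl | hp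
            · exact Finset.mem_erase.2 ⟨hss', Finset.mem_union_left _ hs.1⟩
            · refine Finset.mem_erase.2 ⟨?_, Finset.mem_union_right _ hp⟩
              rintro rfl; exact hs'.2 hp
          · rw [Finset.card_erase_of_mem (Finset.mem_union_left _ hs'.1), hWcard,
              Finset.card_insert_of_notMem hs.2, hzc]
            omega
        rw [this]; exact hAs
      · rw [ta_fix x₀ h1 h2 h3 h4, ← hτeq]; exact hτ
  refine ⟨t, ?_, ?_⟩
  · intro τ
    constructor
    · exact fun h => main τ h
    · intro h
      have := main _ h
      have hcanc : (τ.image ⇑t).image ⇑t = τ := by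
        rw [Finset.image_image]
        have hid : ⇑t ∘ ⇑t = id := funext tt
        rw [hid, Finset.image_id]
      rwa [hcanc] at this
  · apply Finset.eq_of_subset_of_card_le
    · intro x hx
      obtain ⟨p, hp, rfl⟩ := Finset.mem_image.1 hx
      by_cases h2 : p = u
      · subst h2; rw [ta_u]; exact hs.1
      by_cases h4 : p = v
      · subst h4; rw [ta_v]; exact hs'.1
      · have h1 : p ≠ s := fun h => hs.2 (h ▸ hp)
        have h3 : p ≠ s' := fun h => hs'.2 (h ▸ hp)
        rw [ta_fix p h1 h2 h3 h4]
        by_contra hpσ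
        have : p ∈ z \ σ := Finset.mem_sdiff.2 ⟨hp, hpσ⟩
        rw [hzd] at this
        rcases Finset.mem_insert.1 this with h | h
        · exact h2 h
        · rw [Finset.mem_singleton] at h; exact h4 h
    · rw [pcard, hσc, hzc]

end BridgeCase2

end FPAux

namespace FPAux

variable {n d : ℕ}

lemma bridge_core {N : Set (Finset (Fin n))} {σ z : Finset (Fin n)}
    (hσ : IsStar d N σ) (hz : IsStar d N z) :
    ∃ t : Equiv.Perm (Fin n), (∀ τ, τ ∈ N ↔ τ.image ⇑t ∈ N) ∧ z.image ⇑t = σ := by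
  by_cases hne : z = σ
  · refine ⟨Equiv.refl _, ?_, ?_⟩
    · intro τ; simp
    · rw [hne]; simp
  · have hσc := hσ.1
    have hzc := hz.1
    -- |z \ σ| ≤ 2
    have hb2 : (z \ σ).card ≤ 2 := by
      obtain ⟨γ, γ', h1, h2, hsub⟩ := hσ.2.2.2.1 z hz.2.1
      have hbound : ∀ ζ : Finset (Fin n), Vis d N σ ζ → ∃ E : Finset (Fin n),
          E.card ≤ 1 ∧ ζ \ σ ⊆ E := by
        intro ζ hv
        by_cases hne1 : ζ = σ
        · exact ⟨∅, by simp, by simp [hne1]⟩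
        · obtain ⟨w, _, hw2, _, _, _⟩ := vis_struct hσc hv hne1
          exact ⟨{w}, by simp, by rw [hw2]⟩
      obtain ⟨E1, hE1c, hE1s⟩ := hbound γ h1
      obtain ⟨E2, hE2c, hE2s⟩ := hbound γ' h2
      have : z \ σ ⊆ E1 ∪ E2 := by
        intro x hx
        obtain ⟨hx1, hx2⟩ := Finset.mem_sdiff.1 hx
        rcases Finset.mem_union.1 (hsub hx1) with h | h
        · exact Finset.mem_union_left _ (hE1s (Finset.mem_sdiff.2 ⟨h, hx2⟩))
        · exact Finset.mem_union_right _ (hE2s (Finset.mem_sdiff.2 ⟨h, hx2⟩))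
      calc (z \ σ).card ≤ (E1 ∪ E2).card := Finset.card_le_card this
      _ ≤ E1.card + E2.card := Finset.card_union_le _ _
      _ ≤ 2 := by omega
    have hbeq : (σ \ z).card = (z \ σ).card :=
      Finset.card_sdiff_comm (hσc.trans hzc.symm)
    have hbne : (z \ σ).card ≠ 0 := by
      intro h
      apply hne
      apply Finset.eq_of_subset_of_card_le
      · rw [← Finset.sdiff_eq_empty_iff_subset]
        exact Finset.card_eq_zero.1 h
      · omega
    interval_cases hcc : (z \ σ).card
    · exact absurd rfl hbne
    · obtain ⟨u, hu⟩ := Finset.card_eq_one.1 hcc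
      obtain ⟨s, hs⟩ := Finset.card_eq_one.1 (by omega : (σ \ z).card = 1)
      exact bridge_case1 hσ hz hu hs
    · obtain ⟨u, v, huv, huvs⟩ := Finset.card_eq_two.1 hcc
      obtain ⟨s, s', hss', hsss⟩ := Finset.card_eq_two.1 (by omega : (σ \ z).card = 2)
      exact bridge_case2 hσ hz huv hss' huvs hsss

lemma pointed_iso {Xd Xd' : Finset (Finset (Fin n))} {σ : Finset (Fin n)}
    (hXd : ∀ τ ∈ Xd, τ.card = d + 1) (hXd' : ∀ τ ∈ Xd', τ.card = d + 1)
    (hσ : σ.card = d)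
    (h : ComplexIso n (oneNbhd n d Xd σ) (oneNbhd n d Xd' σ)) :
    ∃ e : Equiv.Perm (Fin n),
      (∀ τ, τ ∈ oneNbhd n d Xd σ ↔ τ.image ⇑e ∈ oneNbhd n d Xd' σ) ∧
      σ.image ⇑e = σ := by
  obtain ⟨e, he⟩ := h
  have star1 : IsStar d (oneNbhd n d Xd σ) σ := isStar_oneNbhd hXd hσ
  have star2 : IsStar d (oneNbhd n d Xd' σ) σ := isStar_oneNbhd hXd' hσ
  have starz : IsStar d (oneNbhd n d Xd' σ) (σ.image ⇑e) := isStar_transport he star1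
  obtain ⟨t, ht1, ht2⟩ := bridge_core star2 starz
  refine ⟨e.trans t, ?_, ?_⟩
  · intro τ
    have himg : τ.image ⇑(e.trans t) = (τ.image ⇑e).image ⇑t := by
      rw [Finset.image_image, Equiv.coe_trans]
    rw [himg, ← ht1]
    exact he τ
  · have himg : σ.image ⇑(e.trans t) = (σ.image ⇑e).image ⇑t := by
      rw [Finset.image_image, Equiv.coe_trans]
    rw [himg, ht2]

end FPAux

namespace FPAux

variable {n d : ℕ}

section Fingerprint

variable {Xd Xd' : Finset (Finset (Fin n))} {σ : Finset (Fin n)}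

lemma nbr_symm {a b : Finset (Fin n)} (h : Nbr n d Xd a b) : Nbr n d Xd b a :=
  ⟨h.2.1, h.1, by rw [Finset.union_comm]; exact h.2.2⟩

lemma H_comm (a b : Finset (Fin n)) :
    commonNbhdComplex n d Xd a b = commonNbhdComplex n d Xd b a := by
  ext τ
  simp only [commonNbhdComplex, Set.mem_setOf_eq]
  constructor
  · rintro ⟨h1, α, α', h2, h3, h4, h5, h6⟩
    exact ⟨h1, α, α', h3, h2, h5, h4, h6⟩
  · rintro ⟨h1, α, α', h2, h3, h4, h5, h6⟩
    exact ⟨h1, α, α', h3, h2, h5, h4, h6⟩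

/-- pushing a fingerprint complex through a pointed isomorphism of 1-neighbourhoods. -/
lemma H_push (hXd : ∀ τ ∈ Xd, τ.card = d + 1) (hXd' : ∀ τ ∈ Xd', τ.card = d + 1)
    (hσ : σ.card = d) {e : Equiv.Perm (Fin n)}
    (he : ∀ τ, τ ∈ oneNbhd n d Xd σ ↔ τ.image ⇑e ∈ oneNbhd n d Xd' σ)
    (hfix : σ.image ⇑e = σ) {b : Finset (Fin n)} (hb : Nbr n d Xd σ b) :
    ∀ τ ∈ commonNbhdComplex n d Xd σ b,
      τ.image ⇑e ∈ commonNbhdComplex n d Xd' σ (b.image ⇑e) := by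
  have hbe : Nbr n d Xd' σ (b.image ⇑e) := by
    have h1 : σ ∪ b ∈ oneNbhd n d Xd σ := nbr_union_mem_oneNbhd hb
    have h2 := (he _).1 h1
    rw [punion, hfix] at h2
    refine ⟨hσ, by rw [pcard]; exact hb.2.1, ?_⟩
    apply mem_oneNbhd_top hXd' h2
    rw [← hfix, ← punion, pcard]
    exact hXd _ hb.2.2
  -- pushing a common neighbour
  have hpush : ∀ α : Finset (Fin n), Nbr n d Xd σ α → Nbr n d Xd b α →
      Nbr n d Xd' σ (α.image ⇑e) ∧ Nbr n d Xd' (b.image ⇑e) (α.image ⇑e) := by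
    intro α h1 h2
    have hσα : Nbr n d Xd' σ (α.image ⇑e) := by
      have hm : σ ∪ α ∈ oneNbhd n d Xd σ := nbr_union_mem_oneNbhd h1
      have hm2 := (he _).1 hm
      rw [punion, hfix] at hm2
      refine ⟨hσ, by rw [pcard]; exact h1.2.1, ?_⟩
      apply mem_oneNbhd_top hXd' hm2
      rw [← hfix, ← punion, pcard]
      exact hXd _ h1.2.2
    refine ⟨hσα, ?_⟩
    -- b ∪ α is visible at σ
    have hm : b ∪ α ∈ oneNbhd n d Xd σ := by
      refine ⟨Or.inr h2.2.2, b, α, Or.inr hb, Or.inr h1, subset_rfl⟩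
    have hm2 := (he _).1 hm
    rw [punion] at hm2
    refine ⟨by rw [pcard]; exact hb.2.1, by rw [pcard]; exact h1.2.1, ?_⟩
    apply mem_oneNbhd_top hXd' hm2
    rw [← punion, pcard]
    exact hXd' _ hbe.2.2 ▸ hXd _ h2.2.2
  rintro τ ⟨h1, α, α', h2, h3, h4, h5, h6⟩
  obtain ⟨p1, p2⟩ := hpush α h2 h3
  obtain ⟨p3, p4⟩ := hpush α' h4 h5
  refine ⟨?_, α.image ⇑e, α'.image ⇑e, p1, p2, p3, p4, ?_⟩
  · rcases h1 with h1 | h1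
    · exact Or.inl (by rw [pcard]; exact h1)
    · -- τ ∈ Xd, so τ is visible at σ, push it
      have hm : τ ∈ oneNbhd n d Xd σ :=
        ⟨Or.inr h1, α, α', Or.inr h2, Or.inr h4, h6⟩
      have hm2 := (he _).1 hm
      refine Or.inr (mem_oneNbhd_top hXd' hm2 ?_)
      rw [pcard]
      exact hXd _ h1
  · rw [← punion]
    exact Finset.image_subset_image h6

/-- transfer of a fingerprint through a pointed isomorphism. -/
lemma H_transfer (hXd : ∀ τ ∈ Xd, τ.card = d + 1) (hXd' : ∀ τ ∈ Xd', τ.card = d + 1)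
    (hσ : σ.card = d) {e : Equiv.Perm (Fin n)}
    (he : ∀ τ, τ ∈ oneNbhd n d Xd σ ↔ τ.image ⇑e ∈ oneNbhd n d Xd' σ)
    (hfix : σ.image ⇑e = σ) {y : Finset (Fin n)} (hy : Nbr n d Xd' σ y) :
    Nbr n d Xd σ (y.image ⇑e.symm) ∧
    ∀ τ, τ ∈ commonNbhdComplex n d Xd σ (y.image ⇑e.symm) ↔
      τ.image ⇑e ∈ commonNbhdComplex n d Xd' σ y := by
  have hfix' : σ.image ⇑e.symm = σ := by
    have := congrArg (Finset.image ⇑e.symm) hfix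
    rw [pcancel] at this
    exact this.symm
  have he' : ∀ τ, τ ∈ oneNbhd n d Xd' σ ↔ τ.image ⇑e.symm ∈ oneNbhd n d Xd σ := by
    intro τ
    rw [he (τ.image ⇑e.symm), pcancel']
  have hb : Nbr n d Xd σ (y.image ⇑e.symm) := by
    have h1 : σ ∪ y ∈ oneNbhd n d Xd' σ := nbr_union_mem_oneNbhd hy
    have h2 := (he' _).1 h1
    rw [punion, hfix'] at h2
    refine ⟨hσ, by rw [pcard]; exact hy.2.1, ?_⟩
    apply mem_oneNbhd_top hXd h2
    rw [← hfix', ← punion, pcard]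
    exact hXd' _ hy.2.2
  refine ⟨hb, fun τ => ⟨?_, ?_⟩⟩
  · intro h
    have := H_push hXd hXd' hσ he hfix hb τ h
    rwa [pcancel'] at this
  · intro h
    have := H_push hXd' hXd hσ he' hfix' hy _ h
    rwa [pcancel] at this

end Fingerprint

end FPAux

namespace FPAux

variable {n d : ℕ}

section Endgame

variable {Xd Xd' : Finset (Finset (Fin n))}

/-- the pinning lemma: any `X'`-pair at `σ` is fixed by any pointed isomorphism. -/
lemma key_pin (hd : 0 < d) (hXd : ∀ τ ∈ Xd, τ.card = d + 1)
    (hXd' : ∀ τ ∈ Xd', τ.card = d + 1)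
    (hfp : ∀ σ₁ σ₂ σ₃ σ₄ : Finset (Fin n),
      Nbr n d Xd σ₁ σ₂ → Nbr n d Xd σ₃ σ₄ →
      ComplexIso n (commonNbhdComplex n d Xd σ₁ σ₂) (commonNbhdComplex n d Xd σ₃ σ₄) →
      ({σ₁, σ₂} : Finset (Finset (Fin n))) = {σ₃, σ₄})
    (hiso : ∀ σ : Finset (Fin n), σ.card = d →
      ComplexIso n (oneNbhd n d Xd σ) (oneNbhd n d Xd' σ))
    {σ y : Finset (Fin n)} (hq : Nbr n d Xd' σ y)
    {e : Equiv.Perm (Fin n)}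
    (he : ∀ τ, τ ∈ oneNbhd n d Xd σ ↔ τ.image ⇑e ∈ oneNbhd n d Xd' σ)
    (hfix : σ.image ⇑e = σ) :
    y.image ⇑e.symm = y := by
  have hσc : σ.card = d := hq.1
  have hyc : y.card = d := hq.2.1
  have hσy : σ ≠ y := by
    intro h
    have h1 := hXd' _ hq.2.2
    rw [← h, Finset.union_self] at h1
    omega
  obtain ⟨hb, hiff⟩ := H_transfer hXd hXd' hσc he hfix hq
  set b := y.image ⇑e.symm with hbdef
  -- pointed iso at y
  obtain ⟨f, hf, hffix⟩ := pointed_iso hXd hXd' hyc (hiso y hyc)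
  obtain ⟨hc, hiff2⟩ := H_transfer hXd hXd' hyc hf hffix (nbr_symm hq)
  set c := σ.image ⇑f.symm with hcdef
  -- compose the two isomorphisms
  have hcompiso : ComplexIso n (commonNbhdComplex n d Xd σ b)
      (commonNbhdComplex n d Xd y c) := by
    refine ⟨e.trans f.symm, fun τ => ?_⟩
    have himg : τ.image ⇑(e.trans f.symm) = (τ.image ⇑e).image ⇑f.symm := by
      rw [Finset.image_image, Equiv.coe_trans]
    rw [himg, hiff τ, H_comm]
    constructor
    · intro h
      rw [hiff2 ((τ.image ⇑e).image ⇑f.symm)] at *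
      rwa [pcancel'] 
    · intro h
      rw [hiff2 ((τ.image ⇑e).image ⇑f.symm)] at h
      rwa [pcancel'] at h
  have hpair := hfp σ b y c hb hc hcompiso
  -- analyse the pair equality
  have hσmem : σ ∈ ({y, c} : Finset (Finset (Fin n))) := by
    rw [← hpair]; exact Finset.mem_insert_self _ _
  have hσeq : σ = c := by
    rcases Finset.mem_insert.1 hσmem with h | h
    · exact absurd h hσy
    · rwa [Finset.mem_singleton] at h
  have hbmem : b ∈ ({y, c} : Finset (Finset (Fin n))) := by
    rw [← hpair]; exact Finset.mem_insert_of_mem (Finset.mem_singleton_self _)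
  rcases Finset.mem_insert.1 hbmem with h | h
  · exact h
  · rw [Finset.mem_singleton] at h
    rw [← hσeq] at h
    exfalso
    apply hσy
    have := congrArg (Finset.image ⇑e) h
    rw [pcancel', hfix] at this
    exact this.symm
  
/-- main membership transfer, X'-side to X-side. -/
lemma main_QP (hd : 0 < d) (hXd : ∀ τ ∈ Xd, τ.card = d + 1)
    (hXd' : ∀ τ ∈ Xd', τ.card = d + 1)
    (hfp : ∀ σ₁ σ₂ σ₃ σ₄ : Finset (Fin n),
      Nbr n d Xd σ₁ σ₂ → Nbr n d Xd σ₃ σ₄ →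
      ComplexIso n (commonNbhdComplex n d Xd σ₁ σ₂) (commonNbhdComplex n d Xd σ₃ σ₄) →
      ({σ₁, σ₂} : Finset (Finset (Fin n))) = {σ₃, σ₄})
    (hiso : ∀ σ : Finset (Fin n), σ.card = d →
      ComplexIso n (oneNbhd n d Xd σ) (oneNbhd n d Xd' σ))
    {σ y : Finset (Fin n)} (hq : Nbr n d Xd' σ y) : σ ∪ y ∈ Xd := by
  obtain ⟨e, he, hfix⟩ := pointed_iso hXd hXd' hq.1 (hiso σ hq.1)
  have hy := key_pin hd hXd hXd' hfp hiso hq he hfix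
  have h1 : σ ∪ y ∈ oneNbhd n d Xd' σ := nbr_union_mem_oneNbhd hq
  have he' : ∀ τ, τ ∈ oneNbhd n d Xd' σ ↔ τ.image ⇑e.symm ∈ oneNbhd n d Xd σ := by
    intro τ
    rw [he (τ.image ⇑e.symm), pcancel']
  have h2 := (he' _).1 h1
  have hfix' : σ.image ⇑e.symm = σ := by
    have := congrArg (Finset.image ⇑e.symm) hfix
    rw [pcancel] at this
    exact this.symm
  rw [punion, hfix', hy] at h2
  apply mem_oneNbhd_top hXd h2
  exact hXd' _ hq.2.2

/-- main membership transfer, X-side to X'-side. -/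
lemma main_PQ (hd : 0 < d) (hXd : ∀ τ ∈ Xd, τ.card = d + 1)
    (hXd' : ∀ τ ∈ Xd', τ.card = d + 1)
    (hfp : ∀ σ₁ σ₂ σ₃ σ₄ : Finset (Fin n),
      Nbr n d Xd σ₁ σ₂ → Nbr n d Xd σ₃ σ₄ →
      ComplexIso n (commonNbhdComplex n d Xd σ₁ σ₂) (commonNbhdComplex n d Xd σ₃ σ₄) →
      ({σ₁, σ₂} : Finset (Finset (Fin n))) = {σ₃, σ₄})
    (hiso : ∀ σ : Finset (Fin n), σ.card = d →
      ComplexIso n (oneNbhd n d Xd σ) (oneNbhd n d Xd' σ))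
    {σ σ' : Finset (Fin n)} (hp : Nbr n d Xd σ σ') : σ ∪ σ' ∈ Xd' := by
  obtain ⟨e, he, hfix⟩ := pointed_iso hXd hXd' hp.1 (hiso σ hp.1)
  have h1 : σ ∪ σ' ∈ oneNbhd n d Xd σ := nbr_union_mem_oneNbhd hp
  have h2 := (he _).1 h1
  rw [punion, hfix] at h2
  have hXmem : σ ∪ σ'.image ⇑e ∈ Xd' := by
    apply mem_oneNbhd_top hXd' h2
    rw [← hfix, ← punion, pcard]
    exact hXd _ hp.2.2
  have hq : Nbr n d Xd' σ (σ'.image ⇑e) := ⟨hp.1, by rw [pcard]; exact hp.2.1, hXmem⟩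
  have hy := key_pin hd hXd hXd' hfp hiso hq he hfix
  rw [pcancel] at hy
  rw [← hy] at hXmem
  exact hXmem

end Endgame

end FPAux

/-- **Fingerprint lemma.** Let `X` be a complex with complete `(d-1)`-skeleton and
`d`-simplex set `Xd`. Suppose that whenever the induced subcomplexes `H_{σ₁,σ₂}` and
`H_{σ₃,σ₄}` of two edges are isomorphic the edges coincide as unordered pairs. Then `X`
is exactly reconstructable from its `1`-neighbourhoods: any complex of the same form
whose `1`-neighbourhoods are all isomorphic to those of `X` equals `X`. -/
theorem fingerprint_reconstruction (n d : ℕ) (hd : 0 < d)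
    (Xd : Finset (Finset (Fin n))) (hXd : ∀ τ ∈ Xd, τ.card = d + 1)
    (hfp : ∀ σ₁ σ₂ σ₃ σ₄ : Finset (Fin n),
      Nbr n d Xd σ₁ σ₂ → Nbr n d Xd σ₃ σ₄ →
      ComplexIso n (commonNbhdComplex n d Xd σ₁ σ₂) (commonNbhdComplex n d Xd σ₃ σ₄) →
      ({σ₁, σ₂} : Finset (Finset (Fin n))) = {σ₃, σ₄}) :
    ∀ Xd' : Finset (Finset (Fin n)), (∀ τ ∈ Xd', τ.card = d + 1) →
      (∀ σ : Finset (Fin n), σ.card = d →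
        ComplexIso n (oneNbhd n d Xd σ) (oneNbhd n d Xd' σ)) →
      Xd' = Xd := by
  intro Xd' hXd' hiso
  apply Finset.ext
  intro τ
  have split : ∀ (Y : Finset (Finset (Fin n))), (∀ τ ∈ Y, τ.card = d + 1) → τ ∈ Y →
      ∃ a b : Fin n, a ≠ b ∧ (τ.erase a).card = d ∧ (τ.erase b).card = d ∧
        τ.erase a ∪ τ.erase b = τ := by
    intro Y hY hτ
    have hc : τ.card = d + 1 := hY _ hτ
    obtain ⟨a, ha, b, hb, hab⟩ := Finset.one_lt_card.1 (by omega : 1 < τ.card)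
    refine ⟨a, b, hab, ?_, ?_, ?_⟩
    · rw [Finset.card_erase_of_mem ha, hc]
      omega
    · rw [Finset.card_erase_of_mem hb, hc]
      omega
    · ext x
      simp only [Finset.mem_union, Finset.mem_erase]
      constructor
      · rintro (⟨_, h⟩ | ⟨_, h⟩) <;> exact h
      · intro hx
        by_cases hxa : x = a
        · subst hxa
          exact Or.inr ⟨hab, hx⟩
        · exact Or.inl ⟨hxa, hx⟩
  constructor
  · intro hτ
    obtain ⟨a, b, hab, h1, h2, h3⟩ := split Xd' hXd' hτ
    have hq : Nbr n d Xd' (τ.erase a) (τ.erase b) := ⟨h1, h2, by rw [h3]; exact hτ⟩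
    have := FPAux.main_QP hd hXd hXd' hfp hiso hq
    rwa [h3] at this
  · intro hτ
    obtain ⟨a, b, hab, h1, h2, h3⟩ := split Xd hXd hτ
    have hp : Nbr n d Xd (τ.erase a) (τ.erase b) := ⟨h1, h2, by rw [h3]; exact hτ⟩
    have := FPAux.main_PQ hd hXd hXd' hfp hiso hp
    rwa [h3] at this
end

section
/- In Y_d(n, p_n) with p_n = n^{−α} and 0 < α < 1/2, let σ₁ ∼ σ₂ and σ₃ ∼ σ₄ be two edges of (d−1)-simplexes, S = {σ ∈ X_{d−1} : σ ∼ σᵢ for i = 1,2,3,4}, and Z = 1{σ₁∼σ₃, σ₁∼σ₄} + 1{σ₂∼σ₃, σ₂∼σ₄}. Then for all large n, P(W_{σ₁,σ₂} − |S| − Z ≤ (1/2) n p_n²) ≤ exp(−Θ(n^{1−2α})). -/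
open MeasureTheory Finset
open scoped ENNReal

/-- The Linial–Meshulam measure `Y_d(n,p)`. -/
noncomputable def linialMeshulam (n : ℕ) (p : ℝ≥0∞) :
    Measure (Finset (Fin n) → Bool) :=
  Measure.pi fun _ => (PMF.bernoulli (min p 1).toNNReal
    (by have h := ENNReal.toNNReal_mono ENNReal.one_ne_top (min_le_right p 1); rwa [ENNReal.toNNReal_one] at h)).toMeasure

/-- `σ ∼ σ'` in the configuration `ω`: the union is a `d`-simplex present in `ω`. -/
def nbr (n d : ℕ) (ω : Finset (Fin n) → Bool) (σ σ' : Finset (Fin n)) : Prop :=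
  (σ ∪ σ').card = d + 1 ∧ ω (σ ∪ σ') = true

instance (n d : ℕ) (ω : Finset (Fin n) → Bool) (σ σ' : Finset (Fin n)) :
    Decidable (nbr n d ω σ σ') := by unfold nbr; infer_instance

/-!
For a vertex `v` outside `σ₁ ∪ σ₂ ∪ σ₃ ∪ σ₄`, the face `{v} ∪ (σ₁ ∩ σ₂)` is a common neighbour of
`σ₁` and `σ₂` as soon as `{v} ∪ σ₁` and `{v} ∪ σ₂` are present, and it lies outside `S` as soon as
`{v} ∪ (σ₁ ∩ σ₂) ∪ τ` is absent, where `τ ∈ {σ₃, σ₄}` is different from `σ₁` and `σ₂`. Call `v` good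
when all three happen: this has probability `p²(1 - p)`. The good-vertex events, together with the
event that both given edges are present, read pairwise disjoint sets of coordinates of the product
measure, hence are independent. As `Z ≤ 2`, the bad event forces at most `np²/2 + 2` good vertices
among at least `n - 4d`, whereas their expected number is about `np²`; the exponential Markov
inequality turns this into the bound `exp (-c n p²) = exp (-c n^{1 - 2α})`.
-/

open ProbabilityTheory Real

section Finset

variable {α : Type*} [DecidableEq α]

theorem exists_mem_pair_ne_ne {a b c e : α} (hce : c ≠ e) (h : ({a, b} : Finset α) ≠ {c, e}) :
    ∃ τ, (τ = c ∨ τ = e) ∧ τ ≠ a ∧ τ ≠ b := by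
  by_cases hc : c = a ∨ c = b
  · refine ⟨e, Or.inr rfl, ?_, ?_⟩ <;> rintro rfl <;> rcases hc with rfl | rfl
    exacts [hce rfl, h (Finset.pair_comm _ _), h rfl, hce rfl]
  · exact ⟨c, Or.inl rfl, not_or.1 hc⟩

theorem insert_ne_insert {s t : Finset α} {v : α} (hs : v ∉ s) (ht : v ∉ t) (hst : s ≠ t) :
    insert v s ≠ insert v t := fun h =>
  hst (by rw [← Finset.erase_insert hs, h, Finset.erase_insert ht])

theorem ne_union_of_card_le {s t u : Finset α} (hus : u ≠ s) (hcard : #s ≤ #u) : s ≠ t ∪ u :=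
  fun h => hus (Finset.eq_of_subset_of_card_le (h ▸ Finset.subset_union_right) hcard)

theorem disjoint_image_insert {B C : Finset (Finset α)} {v : α} (hC : ∀ Y ∈ C, v ∉ Y) :
    Disjoint (B.image (insert v)) C :=
  Finset.disjoint_left.2 fun _ hZ hZC => by
    obtain ⟨X, -, rfl⟩ := Finset.mem_image.1 hZ
    exact hC _ hZC (Finset.mem_insert_self v X)

end Finset

theorem dependsOn_finsetProd {ι κ M : Type*} {α : ι → Type*} [DecidableEq ι] [CommMonoid M]
    {J : Finset κ} {f : κ → (Π i, α i) → M} {S : κ → Finset ι}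
    (hf : ∀ j ∈ J, DependsOn (f j) (S j)) :
    DependsOn (fun ω => ∏ j ∈ J, f j ω) (J.biUnion S) := fun _ _ hxy =>
  Finset.prod_congr rfl fun j hj =>
    hf j hj fun i hi => hxy i (Finset.mem_coe.2 (Finset.mem_biUnion.2 ⟨j, hj, hi⟩))

theorem lintegral_piecewise_le_exp {Ω : Type*} [MeasurableSpace Ω] {μ : Measure Ω}
    [IsProbabilityMeasure μ] {A : Set Ω} [DecidablePred (· ∈ A)] (hA : MeasurableSet A)
    {c q : ℝ} (hc0 : 0 ≤ c) (hc1 : c ≤ 1) (hq : ENNReal.ofReal q ≤ μ A) :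
    ∫⁻ ω, A.piecewise (fun _ => ENNReal.ofReal c) (fun _ => 1) ω ∂μ ≤
      ENNReal.ofReal (exp (-((1 - c) * q))) := by
  set p := (μ A).toReal
  have hμA : μ A = ENNReal.ofReal p := (ENNReal.ofReal_toReal (measure_ne_top μ A)).symm
  have hp0 : 0 ≤ p := ENNReal.toReal_nonneg
  have hp1 : p ≤ 1 := by
    rw [← ENNReal.ofReal_le_ofReal_iff zero_le_one, ← hμA, ENNReal.ofReal_one]
    exact prob_le_one
  have hqp : q ≤ p := (ENNReal.ofReal_le_ofReal_iff hp0).1 (hμA ▸ hq)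
  rw [lintegral_piecewise hA, setLIntegral_const, setLIntegral_one, prob_compl_eq_one_sub hA, hμA,
    ← ENNReal.ofReal_one, ← ENNReal.ofReal_sub _ hp0, ← ENNReal.ofReal_mul hc0,
    ← ENNReal.ofReal_add (mul_nonneg hc0 hp0) (by linarith)]
  refine ENNReal.ofReal_le_ofReal ?_
  nlinarith [add_one_le_exp (-((1 - c) * q))]

theorem indicator_inter_card_filter_le_le {Ω κ : Type*} (E : Set Ω) (A : κ → Set Ω)
    [∀ v, DecidablePred (· ∈ A v)] (V : Finset κ) {θ : ℝ} (hθ : 0 ≤ θ) (t : ℝ) (ω : Ω) :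
    (E ∩ {ω | (#{v ∈ V | ω ∈ A v} : ℝ) ≤ t}).indicator 1 ω ≤
      ENNReal.ofReal (exp (θ * t)) * (E.indicator 1 ω *
        ∏ v ∈ V, (A v).piecewise (fun _ => ENNReal.ofReal (exp (-θ))) (fun _ => 1) ω) := by
  by_cases h : ω ∈ E ∩ {ω | (#{v ∈ V | ω ∈ A v} : ℝ) ≤ t}
  · have hprod : ∏ v ∈ V, (A v).piecewise (fun _ => ENNReal.ofReal (exp (-θ))) (fun _ => 1) ω =
        ENNReal.ofReal (exp (-θ * #{v ∈ V | ω ∈ A v})) := by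
      simp only [Set.piecewise, Finset.prod_ite, Finset.prod_const,
        ← ENNReal.ofReal_pow (exp_nonneg _), ← exp_nat_mul]
      ring_nf
    rw [Set.indicator_of_mem h, Set.indicator_of_mem h.1, hprod, Pi.one_apply, one_mul,
      ← ENNReal.ofReal_mul (exp_nonneg _), ← exp_add, ENNReal.one_le_ofReal, one_le_exp_iff]
    have : (#{v ∈ V | ω ∈ A v} : ℝ) ≤ t := h.2
    nlinarith
  · simp [Set.indicator_of_notMem h]

section ProductMeasure

variable {ι β : Type*} [Fintype ι] [MeasurableSpace β] [MeasurableSingletonClass β] [Countable β]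
  {ν : ι → Measure β} [∀ i, IsProbabilityMeasure (ν i)]

omit [MeasurableSingletonClass β] [Countable β] in
theorem iIndepFun_pi_eval : iIndepFun (fun i (ω : ι → β) => ω i) (Measure.pi ν) :=
  iIndepFun_pi (X := fun _ => id) fun _ => aemeasurable_id

theorem indepFun_pi_of_dependsOn {γ δ : Type*} [MeasurableSpace γ] [MeasurableSpace δ]
    [Nonempty γ] [Nonempty δ] {F : (ι → β) → γ} {G : (ι → β) → δ} {S T : Finset ι}
    (hF : DependsOn F S) (hG : DependsOn G T) (hST : Disjoint S T) :
    IndepFun F G (Measure.pi ν) := by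
  obtain ⟨f, rfl⟩ := dependsOn_iff_exists_comp.mp hF
  obtain ⟨g, rfl⟩ := dependsOn_iff_exists_comp.mp hG
  exact (iIndepFun_pi_eval.indepFun_finset S T hST measurable_pi_apply).comp
    (Measurable.of_discrete (f := f)) (Measurable.of_discrete (f := g))

theorem lintegral_mul_pi_of_dependsOn {F G : (ι → β) → ℝ≥0∞} {S T : Finset ι}
    (hF : DependsOn F S) (hG : DependsOn G T) (hST : Disjoint S T) :
    ∫⁻ ω, F ω * G ω ∂Measure.pi ν = (∫⁻ ω, F ω ∂Measure.pi ν) * ∫⁻ ω, G ω ∂Measure.pi ν :=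
  lintegral_mul_eq_lintegral_mul_lintegral_of_indepFun'' Measurable.of_discrete.aemeasurable
    Measurable.of_discrete.aemeasurable (indepFun_pi_of_dependsOn hF hG hST)

theorem lintegral_finsetProd_pi_of_dependsOn [DecidableEq ι] {κ : Type*} (J : Finset κ)
    {f : κ → (ι → β) → ℝ≥0∞} {S : κ → Finset ι} (hf : ∀ j ∈ J, DependsOn (f j) (S j))
    (hS : (J : Set κ).PairwiseDisjoint S) :
    ∫⁻ ω, ∏ j ∈ J, f j ω ∂Measure.pi ν = ∏ j ∈ J, ∫⁻ ω, f j ω ∂Measure.pi ν := by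
  induction J using Finset.cons_induction with
  | empty => simp
  | cons j J hj ih =>
    have hfJ : ∀ i ∈ J, DependsOn (f i) (S i) := fun i hi => hf i (Finset.mem_cons_of_mem hi)
    have hdisj : Disjoint (S j) (J.biUnion S) :=
      (Finset.disjoint_biUnion_right _ _ _).2 fun i hi =>
        hS (by simp) (by simp [hi]) fun h => hj (h ▸ hi)
    simp only [Finset.prod_cons]
    rw [lintegral_mul_pi_of_dependsOn (hf j (Finset.mem_cons_self j J)) (dependsOn_finsetProd hfJ)
      hdisj, ih hfJ (hS.subset (by simp))]

theorem measure_pi_setOf_eval_eq_three [DecidableEq ι] {a b c : ι} (hab : a ≠ b) (hac : a ≠ c)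
    (hbc : b ≠ c) (x y z : β) :
    Measure.pi ν {ω | ω a = x ∧ ω b = y ∧ ω c = z} = ν a {x} * ν b {y} * ν c {z} := by
  set target : ι → β := fun i => if i = a then x else if i = b then y else z
  have hset : {ω : ι → β | ω a = x ∧ ω b = y ∧ ω c = z} =
      ⋂ i ∈ ({a, b, c} : Finset ι), (fun ω : ι → β => ω i) ⁻¹' {target i} := by
    ext ω
    simp [target, hab.symm, hac.symm, hbc.symm]
  have hmarg (i : ι) : Measure.pi ν ((fun ω : ι → β => ω i) ⁻¹' {target i}) = ν i {target i} :=
    (measurePreserving_eval ν i).measure_preimage MeasurableSet.of_discrete.nullMeasurableSet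
  rw [hset, iIndepFun_pi_eval.measure_inter_preimage_eq_mul _ fun _ _ => .of_discrete,
    Finset.prod_insert (by simp [hab, hac]), Finset.prod_insert (by simp [hbc]),
    Finset.prod_singleton, hmarg, hmarg, hmarg, mul_assoc]
  simp [target, hab.symm, hac.symm, hbc.symm]

theorem measure_inter_card_filter_le_le [DecidableEq ι] {κ : Type*} {E : Set (ι → β)}
    {A : κ → Set (ι → β)} [∀ v, DecidablePred (· ∈ A v)] {V : Finset κ} {S₀ : Finset ι}
    {S : κ → Finset ι} (hE : DependsOn (· ∈ E) S₀) (hA : ∀ v ∈ V, DependsOn (· ∈ A v) (S v))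
    (hES : ∀ v ∈ V, Disjoint S₀ (S v)) (hAS : (V : Set κ).PairwiseDisjoint S) {q : ℝ}
    (hq : ∀ v ∈ V, ENNReal.ofReal q ≤ Measure.pi ν (A v)) {θ : ℝ} (hθ : 0 ≤ θ) (t : ℝ) :
    Measure.pi ν (E ∩ {ω | (#{v ∈ V | ω ∈ A v} : ℝ) ≤ t}) ≤
      ENNReal.ofReal (exp (θ * t - (1 - exp (-θ)) * q * #V)) * Measure.pi ν E := by
  set μ := Measure.pi ν
  set g : κ → (ι → β) → ℝ≥0∞ := fun v =>
    (A v).piecewise (fun _ => ENNReal.ofReal (exp (-θ))) (fun _ => 1)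
  have hg : ∀ v ∈ V, DependsOn (g v) (S v) := fun v hv x y hxy => by
    simp only [g, Set.piecewise, show x ∈ A v ↔ y ∈ A v from Iff.of_eq (hA v hv hxy)]
  have hE1 : DependsOn (E.indicator (1 : (ι → β) → ℝ≥0∞)) S₀ := fun x y hxy => by
    classical
    simp only [Set.indicator_apply, Pi.one_apply, show x ∈ E ↔ y ∈ E from Iff.of_eq (hE hxy)]
  have hgE : Disjoint S₀ (V.biUnion S) := (Finset.disjoint_biUnion_right _ _ _).2 hES
  calc μ (E ∩ {ω | (#{v ∈ V | ω ∈ A v} : ℝ) ≤ t})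
      = ∫⁻ ω, (E ∩ {ω | (#{v ∈ V | ω ∈ A v} : ℝ) ≤ t}).indicator 1 ω ∂μ :=
        (lintegral_indicator_one .of_discrete).symm
    _ ≤ ∫⁻ ω, ENNReal.ofReal (exp (θ * t)) * (E.indicator 1 ω * ∏ v ∈ V, g v ω) ∂μ :=
        lintegral_mono fun ω => indicator_inter_card_filter_le_le E A V hθ t ω
    _ = ENNReal.ofReal (exp (θ * t)) * (μ E * ∏ v ∈ V, ∫⁻ ω, g v ω ∂μ) := by
        rw [lintegral_const_mul _ .of_discrete,
          lintegral_mul_pi_of_dependsOn hE1 (dependsOn_finsetProd hg) hgE,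
          lintegral_indicator_one .of_discrete, lintegral_finsetProd_pi_of_dependsOn V hg hAS]
    _ ≤ ENNReal.ofReal (exp (θ * t)) *
          (μ E * ∏ _v ∈ V, ENNReal.ofReal (exp (-((1 - exp (-θ)) * q)))) := by
        gcongr with v hv
        exact lintegral_piecewise_le_exp .of_discrete (exp_nonneg _)
          (exp_le_one_iff.2 (by linarith)) (hq v hv)
    _ = _ := by
        rw [Finset.prod_const, ← ENNReal.ofReal_pow (exp_nonneg _), ← exp_nat_mul, mul_comm (μ E),
          ← mul_assoc, ← ENNReal.ofReal_mul (exp_nonneg _), ← exp_add]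
        congr 3
        ring

end ProductMeasure

section LinialMeshulam

variable {n d : ℕ}

instance (n : ℕ) (p : ℝ≥0∞) : IsProbabilityMeasure (linialMeshulam n p) := by
  unfold linialMeshulam; infer_instance

theorem linialMeshulam_apply_box {r : ℝ} (hr0 : 0 ≤ r) (hr1 : r ≤ 1)
    {a b c : Finset (Fin n)} (hab : a ≠ b) (hac : a ≠ c) (hbc : b ≠ c) :
    linialMeshulam n (ENNReal.ofReal r) {ω | ω a = true ∧ ω b = true ∧ ω c = false} =
      ENNReal.ofReal (r ^ 2 * (1 - r)) := by
  have hmin : min (ENNReal.ofReal r) 1 = ENNReal.ofReal r :=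
    min_eq_left (ENNReal.ofReal_le_one.2 hr1)
  rw [linialMeshulam, measure_pi_setOf_eval_eq_three hab hac hbc]
  simp only [PMF.toMeasure_apply_singleton _ _ (.of_discrete), PMF.bernoulli_apply, hmin]
  rw [cond_true, cond_false, ENNReal.coe_sub, ENNReal.coe_toNNReal ENNReal.ofReal_ne_top,
    ENNReal.coe_one, ← ENNReal.ofReal_one, ← ENNReal.ofReal_sub _ hr0,
    ← ENNReal.ofReal_mul hr0, ← ENNReal.ofReal_mul (by positivity), sq]

def apexFaces (σ₁ σ₂ τ : Finset (Fin n)) : Finset (Finset (Fin n)) := {σ₁, σ₂, σ₁ ∩ σ₂ ∪ τ}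

/-- On this event `insert v (σ₁ ∩ σ₂)` is a common neighbour of `σ₁` and `σ₂` but not a
neighbour of `τ`. -/
def apexEvent (σ₁ σ₂ τ : Finset (Fin n)) (v : Fin n) : Set (Finset (Fin n) → Bool) :=
  {ω | ω (insert v σ₁) = true ∧ ω (insert v σ₂) = true ∧ ω (insert v (σ₁ ∩ σ₂ ∪ τ)) = false}

instance (σ₁ σ₂ τ : Finset (Fin n)) (v : Fin n) : DecidablePred (· ∈ apexEvent σ₁ σ₂ τ v) :=
  fun _ => by unfold apexEvent; infer_instance

theorem notMem_of_mem_apexFaces {σ₁ σ₂ τ X : Finset (Fin n)} {v : Fin n} (hv₁ : v ∉ σ₁)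
    (hv₂ : v ∉ σ₂) (hvτ : v ∉ τ) (hX : X ∈ apexFaces σ₁ σ₂ τ) : v ∉ X := by
  simp only [apexFaces, Finset.mem_insert, Finset.mem_singleton] at hX
  rcases hX with rfl | rfl | rfl
  exacts [hv₁, hv₂, by simp [hv₁, hvτ]]

theorem dependsOn_apexEvent (σ₁ σ₂ τ : Finset (Fin n)) (v : Fin n) :
    DependsOn (· ∈ apexEvent σ₁ σ₂ τ v) ↑((apexFaces σ₁ σ₂ τ).image (insert v)) :=
  fun x y hxy => by
    simp [apexEvent, hxy (insert v σ₁) (by simp [apexFaces]),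
      hxy (insert v σ₂) (by simp [apexFaces]), hxy (insert v (σ₁ ∩ σ₂ ∪ τ)) (by simp [apexFaces])]

theorem linialMeshulam_apexEvent {r : ℝ} (hr0 : 0 ≤ r) (hr1 : r ≤ 1) {σ₁ σ₂ τ : Finset (Fin n)}
    (h₁ : σ₁.card = d) (h₂ : σ₂.card = d) (hτ : τ.card = d) (h₁₂ : σ₁ ≠ σ₂) (hτ₁ : τ ≠ σ₁)
    (hτ₂ : τ ≠ σ₂) {v : Fin n} (hv₁ : v ∉ σ₁) (hv₂ : v ∉ σ₂) (hvτ : v ∉ τ) :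
    linialMeshulam n (ENNReal.ofReal r) (apexEvent σ₁ σ₂ τ v) =
      ENNReal.ofReal (r ^ 2 * (1 - r)) := by
  have hv : v ∉ σ₁ ∩ σ₂ ∪ τ := notMem_of_mem_apexFaces hv₁ hv₂ hvτ (by simp [apexFaces])
  exact linialMeshulam_apply_box hr0 hr1 (insert_ne_insert hv₁ hv₂ h₁₂)
    (insert_ne_insert hv₁ hv (ne_union_of_card_le hτ₁ (by rw [h₁, hτ])))
    (insert_ne_insert hv₂ hv (ne_union_of_card_le hτ₂ (by rw [h₂, hτ])))

variable {ω : Finset (Fin n) → Bool}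

theorem nbr_insert_of_subset {K σ : Finset (Fin n)} {v : Fin n} (hKσ : K ⊆ σ) (hσ : σ.card = d)
    (hv : v ∉ σ) (hω : ω (insert v σ) = true) : nbr n d ω (insert v K) σ := by
  have hu : insert v K ∪ σ = insert v σ := by
    rw [Finset.insert_union, Finset.union_eq_right.2 hKσ]
  exact ⟨by rw [hu, Finset.card_insert_of_notMem hv, hσ], hu ▸ hω⟩

theorem not_nbr_insert {K τ : Finset (Fin n)} {v : Fin n} (hω : ω (insert v (K ∪ τ)) = false) :
    ¬ nbr n d ω (insert v K) τ := fun h => by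
  rw [nbr, Finset.insert_union, hω] at h
  exact Bool.false_ne_true h.2

theorem card_filter_apexEvent_add_card_le {σ₁ σ₂ σ₃ σ₄ τ : Finset (Fin n)} (hd : 0 < d)
    (h₁ : σ₁.card = d) (h₂ : σ₂.card = d) (hK : (σ₁ ∩ σ₂).card = d - 1) (hτ : τ = σ₃ ∨ τ = σ₄)
    {V : Finset (Fin n)} (hV : Disjoint V (σ₁ ∪ σ₂)) :
    #{v ∈ V | ω ∈ apexEvent σ₁ σ₂ τ v} +
      (Finset.univ.filter fun σ : Finset (Fin n) =>
        σ.card = d ∧ nbr n d ω σ σ₁ ∧ nbr n d ω σ σ₂ ∧ nbr n d ω σ σ₃ ∧ nbr n d ω σ σ₄).card ≤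
    (Finset.univ.filter fun σ : Finset (Fin n) =>
        σ.card = d ∧ nbr n d ω σ σ₁ ∧ nbr n d ω σ σ₂).card := by
  set W := Finset.univ.filter fun σ : Finset (Fin n) =>
    σ.card = d ∧ nbr n d ω σ σ₁ ∧ nbr n d ω σ σ₂
  set S := Finset.univ.filter fun σ : Finset (Fin n) =>
    σ.card = d ∧ nbr n d ω σ σ₁ ∧ nbr n d ω σ σ₂ ∧ nbr n d ω σ σ₃ ∧ nbr n d ω σ σ₄
  have hSW : S ⊆ W := fun σ hσ => by
    simp only [S, W, Finset.mem_filter] at hσ ⊢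
    exact ⟨hσ.1, hσ.2.1, hσ.2.2.1, hσ.2.2.2.1⟩
  have hV₁ : ∀ v ∈ V, v ∉ σ₁ := fun v hv h =>
    Finset.disjoint_left.1 hV hv (Finset.mem_union_left _ h)
  rw [← Finset.card_sdiff_add_card_eq_card hSW]
  gcongr
  refine Finset.card_le_card_of_injOn (insert · (σ₁ ∩ σ₂)) (fun v hv => ?_) ?_
  · obtain ⟨hvV, hω₁, hω₂, hωτ⟩ := Finset.mem_filter.1 hv
    have hv₂ : v ∉ σ₂ := fun h => Finset.disjoint_left.1 hV hvV (Finset.mem_union_right _ h)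
    have hcard : (insert v (σ₁ ∩ σ₂)).card = d := by
      rw [Finset.card_insert_of_notMem fun h => hV₁ v hvV (Finset.mem_of_mem_inter_left h), hK]
      omega
    have hτ' : ¬ nbr n d ω (insert v (σ₁ ∩ σ₂)) τ := not_nbr_insert hωτ
    simp only [W, S, Finset.mem_coe, Finset.mem_sdiff, Finset.mem_filter, Finset.mem_univ,
      true_and]
    refine ⟨⟨hcard, nbr_insert_of_subset Finset.inter_subset_left h₁ (hV₁ v hvV) hω₁,
      nbr_insert_of_subset Finset.inter_subset_right h₂ hv₂ hω₂⟩, fun h => ?_⟩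
    rcases hτ with rfl | rfl
    exacts [hτ' h.2.2.2.1, hτ' h.2.2.2.2]
  · intro v hv w _ hvw
    have : v ∈ insert w (σ₁ ∩ σ₂) := by
      rw [← show insert v (σ₁ ∩ σ₂) = insert w (σ₁ ∩ σ₂) from hvw]
      exact Finset.mem_insert_self v _
    exact (Finset.mem_insert.1 this).resolve_right fun h =>
      hV₁ v (Finset.mem_filter.1 hv).1 (Finset.mem_of_mem_inter_left h)

theorem card_filter_apexEvent_le_of_sub_le {σ₁ σ₂ σ₃ σ₄ τ : Finset (Fin n)} (hd : 0 < d)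
    (h₁ : σ₁.card = d) (h₂ : σ₂.card = d) (hK : (σ₁ ∩ σ₂).card = d - 1) (hτ : τ = σ₃ ∨ τ = σ₄)
    {V : Finset (Fin n)} (hV : Disjoint V (σ₁ ∪ σ₂)) {t : ℝ}
    (ht : ((Finset.univ.filter fun σ : Finset (Fin n) =>
            σ.card = d ∧ nbr n d ω σ σ₁ ∧ nbr n d ω σ σ₂).card : ℝ) -
          ((Finset.univ.filter fun σ : Finset (Fin n) =>
            σ.card = d ∧ nbr n d ω σ σ₁ ∧ nbr n d ω σ σ₂ ∧
              nbr n d ω σ σ₃ ∧ nbr n d ω σ σ₄).card : ℝ) -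
          ((if nbr n d ω σ₁ σ₃ ∧ nbr n d ω σ₁ σ₄ then (1 : ℝ) else 0) +
            (if nbr n d ω σ₂ σ₃ ∧ nbr n d ω σ₂ σ₄ then (1 : ℝ) else 0)) ≤ t) :
    (#{v ∈ V | ω ∈ apexEvent σ₁ σ₂ τ v} : ℝ) ≤ t + 2 := by
  have hcount := Nat.cast_le (α := ℝ) |>.2 <|
    card_filter_apexEvent_add_card_le (ω := ω) (σ₃ := σ₃) (σ₄ := σ₄) hd h₁ h₂ hK hτ hV
  push_cast at hcount
  have hZ₁ : (if nbr n d ω σ₁ σ₃ ∧ nbr n d ω σ₁ σ₄ then (1 : ℝ) else 0) ≤ 1 := by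
    split_ifs <;> norm_num
  have hZ₂ : (if nbr n d ω σ₂ σ₃ ∧ nbr n d ω σ₂ σ₄ then (1 : ℝ) else 0) ≤ 1 := by
    split_ifs <;> norm_num
  linarith

theorem sub_le_card_compl_union {σ₁ σ₂ σ₃ σ₄ : Finset (Fin n)} (h₁ : σ₁.card = d)
    (h₂ : σ₂.card = d) (h₃ : σ₃.card = d) (h₄ : σ₄.card = d) :
    (n : ℝ) - 4 * d ≤ #(Finset.univ \ (σ₁ ∪ σ₂ ∪ σ₃ ∪ σ₄)) := by
  have hU : #(σ₁ ∪ σ₂ ∪ σ₃ ∪ σ₄) ≤ 4 * d := by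
    have := (Finset.card_union_le _ _).trans <| Nat.add_le_add_right
      ((Finset.card_union_le _ _).trans <| Nat.add_le_add_right (Finset.card_union_le σ₁ σ₂) #σ₃)
      #σ₄
    omega
  rw [Finset.card_sdiff_of_subset (Finset.subset_univ _), Finset.card_univ, Fintype.card_fin,
    Nat.cast_sub ((Finset.card_le_univ _).trans_eq (Fintype.card_fin n))]
  have : (#(σ₁ ∪ σ₂ ∪ σ₃ ∪ σ₄) : ℝ) ≤ 4 * d := by exact_mod_cast hU
  linarith

theorem linialMeshulam_lowerTail (hd : 0 < d) {r : ℝ} (hr0 : 0 ≤ r) (hr1 : r ≤ 1)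
    {σ₁ σ₂ σ₃ σ₄ : Finset (Fin n)} (h₁ : σ₁.card = d) (h₂ : σ₂.card = d) (h₃ : σ₃.card = d)
    (h₄ : σ₄.card = d) (h₁₂ : σ₁ ≠ σ₂) (h₃₄ : σ₃ ≠ σ₄) (hK : (σ₁ ∩ σ₂).card = d - 1)
    (hpair : ({σ₁, σ₂} : Finset (Finset (Fin n))) ≠ {σ₃, σ₄}) :
    linialMeshulam n (ENNReal.ofReal r)
      {ω | (ω (σ₁ ∪ σ₂) = true ∧ ω (σ₃ ∪ σ₄) = true) ∧
        ((Finset.univ.filter fun σ : Finset (Fin n) =>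
            σ.card = d ∧ nbr n d ω σ σ₁ ∧ nbr n d ω σ σ₂).card : ℝ) -
          ((Finset.univ.filter fun σ : Finset (Fin n) =>
            σ.card = d ∧ nbr n d ω σ σ₁ ∧ nbr n d ω σ σ₂ ∧
              nbr n d ω σ σ₃ ∧ nbr n d ω σ σ₄).card : ℝ) -
          ((if nbr n d ω σ₁ σ₃ ∧ nbr n d ω σ₁ σ₄ then (1 : ℝ) else 0) +
            (if nbr n d ω σ₂ σ₃ ∧ nbr n d ω σ₂ σ₄ then (1 : ℝ) else 0)) ≤
        (n : ℝ) * r ^ 2 / 2} ≤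
    ENNReal.ofReal (exp (n * r ^ 2 / 2 + 2 - (1 - exp (-1)) * (r ^ 2 * (1 - r)) * (n - 4 * d))) *
      linialMeshulam n (ENNReal.ofReal r) {ω | ω (σ₁ ∪ σ₂) = true ∧ ω (σ₃ ∪ σ₄) = true} := by
  obtain ⟨τ, hτ, hτ₁, hτ₂⟩ := exists_mem_pair_ne_ne h₃₄ hpair
  set V := Finset.univ \ (σ₁ ∪ σ₂ ∪ σ₃ ∪ σ₄)
  have hV : ∀ v ∈ V, v ∉ σ₁ ∧ v ∉ σ₂ ∧ v ∉ σ₃ ∧ v ∉ σ₄ := fun v hv => by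
    simpa [V, or_assoc] using hv
  have hVτ : ∀ v ∈ V, v ∉ τ := fun v hv => by rcases hτ with rfl | rfl <;> simp [hV v hv]
  have hE : DependsOn (· ∈ {ω : Finset (Fin n) → Bool | ω (σ₁ ∪ σ₂) = true ∧
      ω (σ₃ ∪ σ₄) = true}) ↑({σ₁ ∪ σ₂, σ₃ ∪ σ₄} : Finset (Finset (Fin n))) := fun x y hxy => by
    simp [hxy (σ₁ ∪ σ₂) (by simp), hxy (σ₃ ∪ σ₄) (by simp)]
  have hES : ∀ v ∈ V, Disjoint {σ₁ ∪ σ₂, σ₃ ∪ σ₄} ((apexFaces σ₁ σ₂ τ).image (insert v)) :=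
    fun v hv => (disjoint_image_insert fun Y hY => by
      simp only [Finset.mem_insert, Finset.mem_singleton] at hY
      rcases hY with rfl | rfl <;> simp [hV v hv]).symm
  have hAS : (V : Set (Fin n)).PairwiseDisjoint fun v => (apexFaces σ₁ σ₂ τ).image (insert v) :=
    fun v hv w _ hvw => disjoint_image_insert fun Y hY => by
      obtain ⟨X, hX, rfl⟩ := Finset.mem_image.1 hY
      simpa [hvw] using notMem_of_mem_apexFaces (hV v hv).1 (hV v hv).2.1 (hVτ v hv) hX
  have hq : ∀ v ∈ V, ENNReal.ofReal (r ^ 2 * (1 - r)) ≤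
      linialMeshulam n (ENNReal.ofReal r) (apexEvent σ₁ σ₂ τ v) := fun v hv =>
    (linialMeshulam_apexEvent hr0 hr1 h₁ h₂ (by rcases hτ with rfl | rfl <;> assumption) h₁₂
      hτ₁ hτ₂ (hV v hv).1 (hV v hv).2.1 (hVτ v hv)).ge
  have hchernoff := measure_inter_card_filter_le_le hE (fun v _ => dependsOn_apexEvent σ₁ σ₂ τ v)
    hES hAS hq zero_le_one ((n : ℝ) * r ^ 2 / 2 + 2)
  have hVσ : Disjoint V (σ₁ ∪ σ₂) :=
    Finset.sdiff_disjoint.mono_right (Finset.subset_union_left.trans Finset.subset_union_left)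
  refine (measure_mono ?_).trans (hchernoff.trans ?_)
  · exact fun ω hω => ⟨hω.1, card_filter_apexEvent_le_of_sub_le hd h₁ h₂ hK hτ hVσ hω.2⟩
  · have hθ : 0 ≤ (1 - exp (-1)) * (r ^ 2 * (1 - r)) :=
      mul_nonneg (by linarith [exp_le_one_iff.2 (by norm_num : (-1 : ℝ) ≤ 0)]) (by nlinarith)
    rw [one_mul]
    gcongr ENNReal.ofReal (exp (_ - ?_)) * _
    exact mul_le_mul_of_nonneg_left (sub_le_card_compl_union h₁ h₂ h₃ h₄) hθ

end LinialMeshulam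

theorem lowerTail_exponent_le {n d r : ℝ} (hr : r ≤ 3 / 100) (hd : 4 * d ≤ 3 / 100 * n)
    (hx : 1000 ≤ n * r ^ 2) :
    n * r ^ 2 / 2 + 2 - (1 - exp (-1)) * (r ^ 2 * (1 - r)) * (n - 4 * d) ≤
      -(1 / 200) * (n * r ^ 2) := by
  have he : exp (-1) ≤ 2 / 5 := by
    rw [exp_neg, inv_le_comm₀ (exp_pos 1) (by norm_num)]
    linarith [exp_one_gt_d9]
  have h₁ : 97 / 100 * (n * r ^ 2) ≤ r ^ 2 * (n - 4 * d) := by nlinarith [sq_nonneg r]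
  have h₂ : 3 / 5 * (97 / 100) ≤ (1 - exp (-1)) * (1 - r) := by nlinarith
  have h₃ := mul_le_mul h₂ h₁ (by positivity) (by linarith)
  nlinarith

theorem mul_rpow_neg_sq {x : ℝ} (hx : 0 < x) (α : ℝ) : x * (x ^ (-α)) ^ 2 = x ^ (1 - 2 * α) := by
  rw [← rpow_natCast, ← rpow_mul hx.le, sub_eq_add_neg, rpow_add hx, rpow_one]
  norm_num [mul_comm]

/-- In `Y_d(n, n^{-α})` with `0 < α < 1/2`, for edges `σ₁ ∼ σ₂` and `σ₃ ∼ σ₄`, with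
`S` the set of common neighbours of all four and
`Z = 1{σ₁∼σ₃, σ₁∼σ₄} + 1{σ₂∼σ₃, σ₂∼σ₄}`, for all large `n`,
`P(W_{σ₁,σ₂} - |S| - Z ≤ n p_n²/2 and both edges present)
  ≤ exp(-Θ(n^{1-2α})) P(both edges present)`. -/
theorem common_neighbour_count_lower_bound (d : ℕ) (hd : 0 < d)
    (α : ℝ) (hα0 : 0 < α) (hα1 : α < 1 / 2) :
    ∃ C > (0 : ℝ), ∃ N : ℕ, ∀ n : ℕ, N ≤ n →
      ∀ σ₁ σ₂ σ₃ σ₄ : Finset (Fin n),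
        σ₁.card = d → σ₂.card = d → σ₃.card = d → σ₄.card = d →
        σ₁ ≠ σ₂ → σ₃ ≠ σ₄ →
        (σ₁ ∩ σ₂).card = d - 1 → (σ₃ ∩ σ₄).card = d - 1 →
        ({σ₁, σ₂} : Finset (Finset (Fin n))) ≠ {σ₃, σ₄} →
        (linialMeshulam n (ENNReal.ofReal ((n : ℝ) ^ (-α)))
          {ω | (ω (σ₁ ∪ σ₂) = true ∧ ω (σ₃ ∪ σ₄) = true) ∧
            ((Finset.univ.filter fun σ : Finset (Fin n) =>
                σ.card = d ∧ nbr n d ω σ σ₁ ∧ nbr n d ω σ σ₂).card : ℝ) -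
              ((Finset.univ.filter fun σ : Finset (Fin n) =>
                σ.card = d ∧ nbr n d ω σ σ₁ ∧ nbr n d ω σ σ₂ ∧
                  nbr n d ω σ σ₃ ∧ nbr n d ω σ σ₄).card : ℝ) -
              ((if nbr n d ω σ₁ σ₃ ∧ nbr n d ω σ₁ σ₄ then (1 : ℝ) else 0) +
                (if nbr n d ω σ₂ σ₃ ∧ nbr n d ω σ₂ σ₄ then (1 : ℝ) else 0)) ≤
            (n : ℝ) * ((n : ℝ) ^ (-α)) ^ 2 / 2}).toReal ≤
        Real.exp (-C * (n : ℝ) ^ (1 - 2 * α)) *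
          (linialMeshulam n (ENNReal.ofReal ((n : ℝ) ^ (-α)))
            {ω | ω (σ₁ ∪ σ₂) = true ∧ ω (σ₃ ∪ σ₄) = true}).toReal := by
  have hsmall : ∀ᶠ n : ℕ in Filter.atTop, (n : ℝ) ^ (-α) < 3 / 100 :=
    ((tendsto_rpow_neg_atTop hα0).comp tendsto_natCast_atTop_atTop).eventually_lt_const
      (by norm_num)
  have hlarge : ∀ᶠ n : ℕ in Filter.atTop, (1000 : ℝ) ≤ (n : ℝ) ^ (1 - 2 * α) :=
    ((tendsto_rpow_atTop (by linarith)).comp tendsto_natCast_atTop_atTop).eventually_ge_atTop _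
  obtain ⟨N, hN⟩ := Filter.eventually_atTop.1
    (hsmall.and (hlarge.and (Filter.eventually_ge_atTop (134 * d + 1))))
  refine ⟨1 / 200, by norm_num, N, fun n hn σ₁ σ₂ σ₃ σ₄ h₁ h₂ h₃ h₄ h₁₂ h₃₄ hK _ hpair => ?_⟩
  obtain ⟨hr, hx, hnd⟩ := hN n hn
  have hn0 : (0 : ℝ) < n := by exact_mod_cast (by omega : 0 < n)
  have hnd' : 4 * (d : ℝ) ≤ 3 / 100 * n := by
    have : (134 * d + 1 : ℝ) ≤ n := by exact_mod_cast hnd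
    linarith
  refine (ENNReal.toReal_mono (by finiteness) (linialMeshulam_lowerTail hd (rpow_nonneg hn0.le _)
    (by linarith) h₁ h₂ h₃ h₄ h₁₂ h₃₄ hK hpair)).trans ?_
  rw [ENNReal.toReal_mul, ENNReal.toReal_ofReal (exp_nonneg _)]
  gcongr
  rw [← mul_rpow_neg_sq hn0 α] at hx ⊢
  exact lowerTail_exponent_le hr.le hnd' hx
end
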